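/- arXiv:math/0307292 — 9 statements merged into one kernel-verified Lean document; each statement's English description precedes it below -/
import Mathlib

section
/- If G admits at least one G-parking function, then G has a spanning tree rooted at 0 (i.e., a subgraph in which every vertex has a unique directed path to 0). -/
open Finset

open scoped Classical

/-- A subtree of the digraph (with multiplicity function `E`) on vertices
`{0,...,n}`, rooted at `0`: every non-root vertex of the subtree has a unique
outgoing edge (its parent together with the index of a parallel edge), and
iterating parents reaches the root. -/
structure Subtree (n : ℕ) (E : Fin (n+1) → Fin (n+1) → ℕ) where
  par : Fin (n+1) → Option (Fin (n+1) × ℕ)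
  root_par : par 0 = none
  edge_valid : ∀ v p k, par v = some (p, k) → k < E v p
  parent_mem : ∀ v p k, par v = some (p, k) → p = 0 ∨ (par p).isSome
  reaches : ∀ v, (par v).isSome →
    Relation.ReflTransGen (fun a c => ∃ k, par a = some (c, k)) v 0

noncomputable def Subtree.verts {n : ℕ} {E : Fin (n+1) → Fin (n+1) → ℕ}
    (t : Subtree n E) : Finset (Fin (n+1)) :=
  Finset.univ.filter (fun v => v = 0 ∨ (t.par v).isSome)

def Subtree.IsSubtreeOf {n : ℕ} {E : Fin (n+1) → Fin (n+1) → ℕ}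
    (t T : Subtree n E) : Prop :=
  ∀ v, (t.par v).isSome → t.par v = T.par v

def Subtree.IsSpanning {n : ℕ} {E : Fin (n+1) → Fin (n+1) → ℕ}
    (T : Subtree n E) : Prop :=
  ∀ v, v ∈ T.verts

/-- `b` is a `G`-parking function: for every non-empty set `U` of non-root
vertices there is `j ∈ U` with more than `b j` edges from `j` to the
complement of `U`. (The value `b 0` at the root is irrelevant.) -/
def IsParking {n : ℕ} (E : Fin (n+1) → Fin (n+1) → ℕ) (b : Fin (n+1) → ℕ) : Prop :=
  ∀ U : Finset (Fin (n+1)), U.Nonempty → 0 ∉ U → ∃ j ∈ U, b j < ∑ i ∈ Uᶜ, E j i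

/-!
Grow a rooted subtree greedily. If the vertex set `S` of the current subtree misses some vertex,
apply the parking condition to `U = Sᶜ` (which avoids the root): some `j ∉ S` has more than
`b j ≥ 0` edges into `S`, so `j` can be attached to the subtree by one of them. A subtree whose
complement has minimal size therefore spans.
-/

theorem IsParking.exists_edge_into {n : ℕ} {E : Fin (n+1) → Fin (n+1) → ℕ} {b : Fin (n+1) → ℕ}
    (hb : IsParking E b) {S : Finset (Fin (n+1))} (h0 : 0 ∈ S) (hS : Sᶜ.Nonempty) :
    ∃ j ∉ S, ∃ p ∈ S, 0 < E j p := by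
  unfold IsParking at hb
  obtain ⟨j, hjS, hjb⟩ := hb Sᶜ hS (by simpa using h0)
  rw [compl_compl] at hjb
  obtain ⟨p, hp, hEp⟩ := exists_ne_zero_of_sum_ne_zero (by omega : ∑ i ∈ S, E j i ≠ 0)
  exact ⟨j, mem_compl.mp hjS, p, hp, Nat.pos_of_ne_zero hEp⟩

namespace Subtree

variable {n : ℕ} {E : Fin (n+1) → Fin (n+1) → ℕ}

theorem mem_verts {t : Subtree n E} {v : Fin (n+1)} :
    v ∈ t.verts ↔ v = 0 ∨ (t.par v).isSome := by
  simp [verts]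

theorem zero_mem_verts (t : Subtree n E) : 0 ∈ t.verts :=
  mem_verts.mpr (Or.inl rfl)

theorem par_eq_none_of_notMem {t : Subtree n E} {v : Fin (n+1)} (hv : v ∉ t.verts) :
    t.par v = none := by
  simp only [mem_verts, not_or, Option.not_isSome_iff_eq_none] at hv
  exact hv.2

def root : Subtree n E where
  par _ := none
  root_par := rfl
  edge_valid := by simp
  parent_mem := by simp
  reaches := by simp

def graft (t : Subtree n E) {j p : Fin (n+1)} (hj : j ∉ t.verts) (hp : p ∈ t.verts)
    (hE : 0 < E j p) : Subtree n E where
  par := Function.update t.par j (some (p, 0))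
  root_par := by
    rw [Function.update_of_ne (ne_of_mem_of_not_mem t.zero_mem_verts hj), t.root_par]
  edge_valid v q k hv := by
    by_cases hvj : v = j
    · subst hvj
      obtain ⟨rfl, rfl⟩ : p = q ∧ 0 = k := by simpa using hv
      exact hE
    · rw [Function.update_of_ne hvj] at hv
      exact t.edge_valid v q k hv
  parent_mem v q k hv := by
    have hjn := par_eq_none_of_notMem hj
    by_cases hvj : v = j
    · subst hvj
      obtain ⟨rfl, rfl⟩ : p = q ∧ 0 = k := by simpa using hv
      rw [Function.update_of_ne (ne_of_mem_of_not_mem hp hj)]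
      exact mem_verts.mp hp
    · rw [Function.update_of_ne hvj] at hv
      refine (t.parent_mem v q k hv).imp id fun hq => ?_
      have hqj : q ≠ j := by rintro rfl; simp [hjn] at hq
      rwa [Function.update_of_ne hqj]
  reaches v hv := by
    have hjn := par_eq_none_of_notMem hj
    -- `j` has no parent in `t`, so no step of a `t`-path starts at `j`.
    have lift (a : Fin (n+1)) :
        Relation.ReflTransGen (fun a c => ∃ k, t.par a = some (c, k)) a 0 →
        Relation.ReflTransGen
          (fun a c => ∃ k, Function.update t.par j (some (p, 0)) a = some (c, k)) a 0 :=
      Relation.ReflTransGen.mono (fun x _ ⟨k, hk⟩ => by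
        have hxj : x ≠ j := by rintro rfl; simp [hjn] at hk
        exact ⟨k, by rwa [Function.update_of_ne hxj]⟩) a 0
    by_cases hvj : v = j
    · subst hvj
      refine Relation.ReflTransGen.head ⟨0, Function.update_self _ _ _⟩ ?_
      rcases mem_verts.mp hp with rfl | hp
      · exact Relation.ReflTransGen.refl
      · exact lift p (t.reaches p hp)
    · rw [Function.update_of_ne hvj] at hv
      exact lift v (t.reaches v hv)

theorem verts_graft (t : Subtree n E) {j p : Fin (n+1)} (hj : j ∉ t.verts) (hp : p ∈ t.verts)
    (hE : 0 < E j p) : (t.graft hj hp hE).verts = insert j t.verts := by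
  ext v
  by_cases hvj : v = j <;> simp [mem_verts, graft, hvj]

end Subtree

/-- If `G` admits at least one `G`-parking function, then `G` has a spanning
tree rooted at `0`. -/
theorem stmt_3 (n : ℕ) (E : Fin (n+1) → Fin (n+1) → ℕ)
    (h : ∃ b : Fin (n+1) → ℕ, IsParking E b) :
    ∃ T : Subtree n E, T.IsSpanning := by
  obtain ⟨b, hb⟩ := h
  obtain ⟨T, -, hT⟩ := (measure fun t : Subtree n E => t.vertsᶜ.card).wf.has_min
    Set.univ ⟨Subtree.root, trivial⟩
  refine ⟨T, fun v => ?_⟩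
  by_contra hv
  obtain ⟨j, hj, p, hp, hE⟩ :=
    hb.exists_edge_into T.zero_mem_verts ⟨v, mem_compl.mpr hv⟩
  refine hT (T.graft hj hp hE) trivial ?_
  show (T.graft hj hp hE).vertsᶜ.card < T.vertsᶜ.card
  rw [Subtree.verts_graft]
  exact card_lt_card (compl_ssubset_compl.mpr (ssubset_insert hj))
end

section
/- For any directed graph G on vertices {0,...,n} (multiple edges allowed, no loops), the set of G-parking functions has the same cardinality as the set of spanning trees of G rooted at 0. -/
open Finset

open scoped Classical

/-!
Dhar's burning algorithm. Starting from `{0}`, burn one at a time an unburnt vertex `j` with more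
than `b j` edges into the burnt set; `b` is a parking function exactly when every vertex burns.
A spanning tree is burnt in the same way, a vertex becoming burnable once its parent is burnt.

For a fixed vertex `v`, list the vertices `p` in burning order and give each the block of `E v p`
consecutive integers starting at the number of edges from `v` to vertices burnt before `p`; these
blocks tile `[0, ∑ i, E v i)`. The block containing `b v` names a parent `p` and an edge index
`k`, and conversely a tree edge `(v, p, k)` names a value `b v`. As `b v` lies in the block of `p`
exactly when `v` becomes burnable at the moment `p` burns, the parking function and the tree burn
in the same order, and the two constructions are mutually inverse.
-/

lemma Relation.reflTransGen_of_forall_exists_lt {α : Type*} {r : α → α → Prop} (f : α → ℕ)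
    {a : α} (h : ∀ v, v ≠ a → ∃ c, r v c ∧ f c < f v) (v : α) :
    Relation.ReflTransGen r v a := by
  induction hv : f v using Nat.strong_induction_on generalizing v with
  | _ m ih =>
    by_cases hva : v = a
    · rw [hva]
    · obtain ⟨c, hvc, hc⟩ := h v hva
      exact .head hvc (ih _ (hv ▸ hc) c rfl)

variable {n : ℕ}

section Burning

variable (g : Fin (n+1) → Finset (Fin (n+1)) → Prop)

noncomputable def burnStep (B : Finset (Fin (n+1))) : Finset (Fin (n+1)) :=
  if h : (univ.filter fun j => j ∉ B ∧ g j B).Nonempty then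
    insert ((univ.filter fun j => j ∉ B ∧ g j B).min' h) B
  else B

noncomputable def burnt (t : ℕ) : Finset (Fin (n+1)) := (burnStep g)^[t] {0}

-- Junk value `0` (`sInf ∅`) for a vertex that never burns, hence the hypotheses `∃ t, v ∈ burnt g t`.
noncomputable def burnTime (v : Fin (n+1)) : ℕ := sInf {t | v ∈ burnt g t}

variable {g}

lemma burnt_zero : burnt g 0 = {0} := rfl

lemma burnt_succ (t : ℕ) : burnt g (t+1) = burnStep g (burnt g t) :=
  Function.iterate_succ_apply' _ _ _

lemma burnStep_eq_insert {B : Finset (Fin (n+1))} (h : ∃ j ∉ B, g j B) :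
    ∃ w ∉ B, g w B ∧ burnStep g B = insert w B := by
  have hne : (univ.filter fun j => j ∉ B ∧ g j B).Nonempty := by
    obtain ⟨j, hjB, hj⟩ := h
    exact ⟨j, by simp [hjB, hj]⟩
  have hmem := (mem_filter.mp (min'_mem _ hne)).2
  exact ⟨_, hmem.1, hmem.2, dif_pos hne⟩

lemma burnStep_eq_self {B : Finset (Fin (n+1))} (h : ¬ ∃ j ∉ B, g j B) :
    burnStep g B = B :=
  dif_neg fun ⟨j, hj⟩ => h ⟨j, (mem_filter.mp hj).2⟩

lemma burnt_succ_eq_or (t : ℕ) :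
    burnt g (t+1) = burnt g t ∨
      ∃ w ∉ burnt g t, g w (burnt g t) ∧ burnt g (t+1) = insert w (burnt g t) := by
  rw [burnt_succ]
  by_cases h : ∃ j ∉ burnt g t, g j (burnt g t)
  · exact Or.inr (burnStep_eq_insert h)
  · exact Or.inl (burnStep_eq_self h)

lemma burnt_subset_succ (t : ℕ) : burnt g t ⊆ burnt g (t+1) := by
  rcases burnt_succ_eq_or (g := g) t with h | ⟨w, -, -, h⟩ <;> rw [h]
  exact subset_insert _ _

lemma burnt_mono : Monotone (burnt g) :=
  monotone_nat_of_le_succ burnt_subset_succ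

lemma zero_mem_burnt (t : ℕ) : (0 : Fin (n+1)) ∈ burnt g t :=
  burnt_mono (Nat.zero_le t) (mem_singleton_self 0)

lemma ne_zero_of_notMem_burnt {v : Fin (n+1)} {t : ℕ} (h : v ∉ burnt g t) : v ≠ 0 :=
  fun hv => h (hv ▸ zero_mem_burnt t)

lemma burnt_congr {g' : Fin (n+1) → Finset (Fin (n+1)) → Prop}
    (h : ∀ t, ∀ j ∉ burnt g' t, g j (burnt g' t) ↔ g' j (burnt g' t)) :
    burnt g = burnt g' := by
  funext t
  induction t with
  | zero => rfl
  | succ t ih =>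
    have hfilter : (univ.filter fun j => j ∉ burnt g' t ∧ g j (burnt g' t)) =
        univ.filter fun j => j ∉ burnt g' t ∧ g' j (burnt g' t) :=
      filter_congr fun j _ => and_congr_right (h t j)
    rw [burnt_succ, burnt_succ, ih]
    unfold burnStep
    rw [hfilter]

lemma burnt_eq_univ (h : ∀ t, burnt g t ≠ univ → ∃ j ∉ burnt g t, g j (burnt g t)) :
    burnt g n = univ := by
  have hcard : ∀ t, burnt g t ≠ univ → t + 1 ≤ #(burnt g t) := by
    intro t
    induction t with
    | zero => simp [burnt_zero]
    | succ t ih =>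
      intro hne
      have hne' : burnt g t ≠ univ := fun he => hne (eq_univ_of_forall fun v =>
        burnt_subset_succ t (he ▸ mem_univ v))
      obtain ⟨w, hw, -, hins⟩ := burnStep_eq_insert (h t hne')
      rw [burnt_succ, hins, card_insert_of_notMem hw]
      exact Nat.succ_le_succ (ih hne')
  by_contra hne
  refine hne (eq_univ_of_card _ (le_antisymm ?_ ?_))
  · exact card_le_univ _
  · simpa using hcard n hne

lemma mem_burnt_iff_burnTime_le {v : Fin (n+1)} (hv : ∃ t, v ∈ burnt g t) (t : ℕ) :
    v ∈ burnt g t ↔ burnTime g v ≤ t :=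
  ⟨fun h => Nat.sInf_le h, fun h => burnt_mono h (Nat.sInf_mem hv)⟩

lemma burnTime_zero : burnTime g 0 = 0 :=
  Nat.le_zero.mp (Nat.sInf_le (zero_mem_burnt (g := g) 0))

lemma burnTime_eq_succ {w : Fin (n+1)} {t : ℕ} (h : w ∈ burnt g (t+1)) (h' : w ∉ burnt g t) :
    burnTime g w = t + 1 := by
  have hiff := mem_burnt_iff_burnTime_le ⟨_, h⟩
  have h₁ := (hiff t).not.mp h'
  have h₂ := (hiff (t+1)).mp h
  omega

lemma exists_burnTime_eq_succ {v : Fin (n+1)} (hv : ∃ t, v ∈ burnt g t) (h0 : v ≠ 0) :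
    ∃ t, burnTime g v = t + 1 ∧ v ∉ burnt g t ∧ g v (burnt g t) ∧
      burnt g (t+1) = insert v (burnt g t) := by
  obtain ⟨t, ht⟩ : ∃ t, burnTime g v = t + 1 := by
    refine Nat.exists_eq_succ_of_ne_zero fun hz => h0 ?_
    simpa [hz, burnt_zero] using (mem_burnt_iff_burnTime_le hv 0).mpr hz.le
  have hvt : v ∉ burnt g t := by rw [mem_burnt_iff_burnTime_le hv]; omega
  have hvt' : v ∈ burnt g (t+1) := by rw [mem_burnt_iff_burnTime_le hv]; omega
  rcases burnt_succ_eq_or (g := g) t with h | ⟨w, -, hw, h⟩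
  · exact absurd (h ▸ hvt') hvt
  · obtain rfl : v = w := (mem_insert.mp (h ▸ hvt')).resolve_right hvt
    exact ⟨t, ht, hvt, hw, h⟩

lemma eq_of_forall_mem_burnt_iff {p q : Fin (n+1)} (hp : ∃ t, p ∈ burnt g t)
    (h : ∀ t, p ∈ burnt g t ↔ q ∈ burnt g t) : p = q := by
  by_cases hp0 : p = 0
  · subst hp0
    simpa [burnt_zero, eq_comm] using (h 0).mp (zero_mem_burnt 0)
  · obtain ⟨t, -, hpt, -, hins⟩ := exists_burnTime_eq_succ hp hp0
    have hq := (h (t+1)).mp (hins ▸ mem_insert_self p _)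
    rw [hins, mem_insert] at hq
    exact (hq.resolve_right fun hq => hpt ((h t).mpr hq)).symm

end Burning

noncomputable def edgesBurntBefore (E : Fin (n+1) → Fin (n+1) → ℕ)
    (g : Fin (n+1) → Finset (Fin (n+1)) → Prop) (v p : Fin (n+1)) : ℕ :=
  ∑ i ∈ (burnt g (burnTime g p)).erase p, E v i

section EdgeCount

variable {g : Fin (n+1) → Finset (Fin (n+1)) → Prop} {E : Fin (n+1) → Fin (n+1) → ℕ}

lemma edgesBurntBefore_congr {g' : Fin (n+1) → Finset (Fin (n+1)) → Prop}
    (h : burnt g = burnt g') (v p : Fin (n+1)) :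
    edgesBurntBefore E g v p = edgesBurntBefore E g' v p := by
  simp only [edgesBurntBefore, burnTime, h]

lemma edgesBurntBefore_add_lt_sum_iff {v p : Fin (n+1)} {k : ℕ} (hp : ∃ t, p ∈ burnt g t)
    (hk : k < E v p) (t : ℕ) :
    edgesBurntBefore E g v p + k < ∑ i ∈ burnt g t, E v i ↔ p ∈ burnt g t := by
  have hpmem : p ∈ burnt g (burnTime g p) := Nat.sInf_mem hp
  have hsum : edgesBurntBefore E g v p + E v p = ∑ i ∈ burnt g (burnTime g p), E v i :=
    sum_erase_add _ _ hpmem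
  constructor
  · intro hlt
    by_contra hpt
    have hsub : burnt g t ⊆ (burnt g (burnTime g p)).erase p := fun i hi =>
      mem_erase.mpr ⟨fun hip => hpt (hip ▸ hi),
        burnt_mono (le_of_not_ge fun hle => hpt (burnt_mono hle hpmem)) hi⟩
    have := sum_le_sum_of_subset (f := E v) hsub
    rw [edgesBurntBefore] at hlt
    omega
  · intro hpt
    have := sum_le_sum_of_subset (f := E v)
      (burnt_mono (g := g) ((mem_burnt_iff_burnTime_le hp t).mp hpt))
    omega

lemma exists_edgesBurntBefore_add_eq {v : Fin (n+1)} {m t : ℕ}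
    (hm : m < ∑ i ∈ burnt g t, E v i) :
    ∃ p ∈ burnt g t, ∃ k < E v p, m = edgesBurntBefore E g v p + k := by
  induction t with
  | zero =>
    refine ⟨0, zero_mem_burnt 0, m, by simpa [burnt_zero] using hm, ?_⟩
    simp [edgesBurntBefore, burnTime_zero, burnt_zero]
  | succ t ih =>
    by_cases hmt : m < ∑ i ∈ burnt g t, E v i
    · obtain ⟨p, hp, hpk⟩ := ih hmt
      exact ⟨p, burnt_subset_succ t hp, hpk⟩
    rcases burnt_succ_eq_or (g := g) t with h | ⟨w, hw, -, h⟩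
    · exact absurd (h ▸ hm) hmt
    · have hwmem : w ∈ burnt g (t+1) := h ▸ mem_insert_self w _
      have hbefore : edgesBurntBefore E g v w = ∑ i ∈ burnt g t, E v i := by
        rw [edgesBurntBefore, burnTime_eq_succ hwmem hw, h, erase_insert hw]
      rw [h, sum_insert hw] at hm
      exact ⟨w, hwmem, m - ∑ i ∈ burnt g t, E v i, by omega, by omega⟩

lemma eq_of_edgesBurntBefore_add_eq {v p q : Fin (n+1)} {k l : ℕ}
    (hp : ∃ t, p ∈ burnt g t) (hq : ∃ t, q ∈ burnt g t) (hk : k < E v p) (hl : l < E v q)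
    (h : edgesBurntBefore E g v p + k = edgesBurntBefore E g v q + l) : p = q ∧ k = l := by
  obtain rfl : p = q := eq_of_forall_mem_burnt_iff hp fun t => by
    rw [← edgesBurntBefore_add_lt_sum_iff hp hk, ← edgesBurntBefore_add_lt_sum_iff hq hl, h]
  exact ⟨rfl, by omega⟩

end EdgeCount

def parkingRule (E : Fin (n+1) → Fin (n+1) → ℕ) (b : Fin (n+1) → ℕ) :
    Fin (n+1) → Finset (Fin (n+1)) → Prop :=
  fun j B => b j < ∑ i ∈ B, E j i

def treeRule {E : Fin (n+1) → Fin (n+1) → ℕ} (T : Subtree n E) :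
    Fin (n+1) → Finset (Fin (n+1)) → Prop :=
  fun j B => ∃ p k, T.par j = some (p, k) ∧ p ∈ B

variable {E : Fin (n+1) → Fin (n+1) → ℕ}

theorem isParking_iff_forall_mem_burnt {b : Fin (n+1) → ℕ} :
    IsParking E b ↔ ∀ v, ∃ t, v ∈ burnt (parkingRule E b) t := by
  constructor
  · intro hb v
    refine ⟨n, burnt_eq_univ (fun t ht => ?_) ▸ mem_univ v⟩
    obtain ⟨j, hj, hbj⟩ := hb (burnt (parkingRule E b) t)ᶜ
      ((compl_ne_univ_iff_nonempty _).mp (by rwa [compl_compl])) (by simp [zero_mem_burnt])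
    exact ⟨j, mem_compl.mp hj, by rwa [compl_compl] at hbj⟩
  · intro hall U hU hU0
    obtain ⟨j, hjU, hjmin⟩ := exists_min_image U (burnTime (parkingRule E b)) hU
    obtain ⟨t, ht, -, hbj, -⟩ :=
      exists_burnTime_eq_succ (hall j) (fun h => hU0 (h ▸ hjU))
    refine ⟨j, hjU, hbj.trans_le (sum_le_sum_of_subset fun i hi => mem_compl.mpr fun hiU => ?_)⟩
    have := (mem_burnt_iff_burnTime_le (hall i) t).mp hi
    have := hjmin i hiU
    omega

namespace Subtree

variable {T : Subtree n E}

lemma ext {T₁ T₂ : Subtree n E} (h : T₁.par = T₂.par) : T₁ = T₂ := by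
  cases T₁; cases T₂; subst h; rfl

lemma IsSpanning.exists_par_eq_some (hT : T.IsSpanning) {v : Fin (n+1)} (hv : v ≠ 0) :
    ∃ p k, T.par v = some (p, k) := by
  have hmem := hT v
  simp only [verts, mem_filter, mem_univ, true_and] at hmem
  obtain ⟨⟨p, k⟩, hpk⟩ := Option.isSome_iff_exists.mp (hmem.resolve_left hv)
  exact ⟨p, k, hpk⟩

lemma treeRule_iff {j p : Fin (n+1)} {k : ℕ} (h : T.par j = some (p, k))
    (B : Finset (Fin (n+1))) : treeRule T j B ↔ p ∈ B := by
  constructor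
  · rintro ⟨p', k', h', hp'⟩
    obtain ⟨rfl, rfl⟩ := Prod.mk.inj (Option.some.inj (h.symm.trans h'))
    exact hp'
  · exact fun hp => ⟨p, k, h, hp⟩

lemma exists_treeRule_of_notMem {B : Finset (Fin (n+1))} (h0 : 0 ∈ B) {v : Fin (n+1)}
    (hv : (T.par v).isSome) (hvB : v ∉ B) : ∃ j ∉ B, treeRule T j B := by
  have hreach := T.reaches v hv
  clear hv
  revert hvB
  induction hreach using Relation.ReflTransGen.head_induction_on with
  | refl => exact fun h => absurd h0 h
  | @head a c hac _ ih =>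
    intro haB
    obtain ⟨k, hk⟩ := hac
    by_cases hc : c ∈ B
    · exact ⟨a, haB, c, k, hk, hc⟩
    · exact ih hc

lemma IsSpanning.forall_mem_burnt (hT : T.IsSpanning) (v : Fin (n+1)) :
    ∃ t, v ∈ burnt (treeRule T) t := by
  refine ⟨n, burnt_eq_univ (fun t ht => ?_) ▸ mem_univ v⟩
  obtain ⟨w, hw⟩ := not_forall.mp fun h => ht (eq_univ_of_forall h)
  obtain ⟨p, k, hpk⟩ := hT.exists_par_eq_some (ne_zero_of_notMem_burnt hw)
  exact exists_treeRule_of_notMem (zero_mem_burnt t) (by simp [hpk]) hw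

end Subtree

lemma parkingRule_iff_treeRule {g : Fin (n+1) → Finset (Fin (n+1)) → Prop}
    {b : Fin (n+1) → ℕ} {T : Subtree n E} {j p : Fin (n+1)} {k : ℕ}
    (hp : ∃ t, p ∈ burnt g t) (hpk : T.par j = some (p, k))
    (hb : b j = edgesBurntBefore E g j p + k) (t : ℕ) :
    parkingRule E b j (burnt g t) ↔ treeRule T j (burnt g t) := by
  rw [T.treeRule_iff hpk, parkingRule, hb]
  exact edgesBurntBefore_add_lt_sum_iff hp (T.edge_valid j p k hpk) t

section TreeToParking

noncomputable def treeToParking (T : Subtree n E) (v : Fin (n+1)) : ℕ :=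
  match T.par v with
  | none => 0
  | some (p, k) => edgesBurntBefore E (treeRule T) v p + k

variable {T : Subtree n E}

lemma treeToParking_zero (T : Subtree n E) : treeToParking T 0 = 0 := by
  rw [treeToParking, T.root_par]

lemma treeToParking_of_par_eq {v p : Fin (n+1)} {k : ℕ} (h : T.par v = some (p, k)) :
    treeToParking T v = edgesBurntBefore E (treeRule T) v p + k := by
  rw [treeToParking, h]

lemma burnt_parkingRule_treeToParking (hT : T.IsSpanning) :
    burnt (parkingRule E (treeToParking T)) = burnt (treeRule T) :=
  burnt_congr fun t j hj => by
    obtain ⟨p, k, hpk⟩ := hT.exists_par_eq_some (ne_zero_of_notMem_burnt hj)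
    exact parkingRule_iff_treeRule (hT.forall_mem_burnt p) hpk (treeToParking_of_par_eq hpk) t

lemma isParking_treeToParking (hT : T.IsSpanning) : IsParking E (treeToParking T) := by
  rw [isParking_iff_forall_mem_burnt, burnt_parkingRule_treeToParking hT]
  exact hT.forall_mem_burnt

end TreeToParking

section ParkingToTree

variable {b : Fin (n+1) → ℕ}

noncomputable def parkingToPar (E : Fin (n+1) → Fin (n+1) → ℕ) (b : Fin (n+1) → ℕ)
    (v : Fin (n+1)) : Option (Fin (n+1) × ℕ) :=
  if h : v ≠ 0 ∧ ∃ e : Fin (n+1) × ℕ,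
      e.2 < E v e.1 ∧ b v = edgesBurntBefore E (parkingRule E b) v e.1 + e.2
  then some h.2.choose else none

lemma parkingToPar_zero : parkingToPar E b 0 = none :=
  dif_neg fun h => h.1 rfl

lemma parkingToPar_spec {v p : Fin (n+1)} {k : ℕ} (h : parkingToPar E b v = some (p, k)) :
    v ≠ 0 ∧ k < E v p ∧ b v = edgesBurntBefore E (parkingRule E b) v p + k := by
  unfold parkingToPar at h
  split_ifs at h with hv
  obtain ⟨hk, hbk⟩ := hv.2.choose_spec
  rw [Option.some.inj h] at hk hbk
  exact ⟨hv.1, hk, hbk⟩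

lemma parkingToPar_isSome (hb : IsParking E b) {v : Fin (n+1)} (hv : v ≠ 0) :
    (parkingToPar E b v).isSome := by
  obtain ⟨t, -, -, hbv, -⟩ := exists_burnTime_eq_succ (isParking_iff_forall_mem_burnt.mp hb v) hv
  obtain ⟨p, -, k, hk, hbk⟩ := exists_edgesBurntBefore_add_eq hbv
  rw [parkingToPar, dif_pos ⟨hv, (p, k), hk, hbk⟩]
  rfl

lemma burnTime_lt_of_parkingToPar_eq_some (hb : IsParking E b) {v p : Fin (n+1)} {k : ℕ}
    (h : parkingToPar E b v = some (p, k)) :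
    burnTime (parkingRule E b) p < burnTime (parkingRule E b) v := by
  have hall := isParking_iff_forall_mem_burnt.mp hb
  obtain ⟨hv, hk, hbk⟩ := parkingToPar_spec h
  obtain ⟨t, ht, -, hbv, -⟩ := exists_burnTime_eq_succ (hall v) hv
  have hpt := (edgesBurntBefore_add_lt_sum_iff (hall p) hk t).mp (hbk ▸ hbv)
  have := (mem_burnt_iff_burnTime_le (hall p) t).mp hpt
  omega

noncomputable def parkingToTree (hb : IsParking E b) : Subtree n E where
  par := parkingToPar E b
  root_par := parkingToPar_zero
  edge_valid _ _ _ h := (parkingToPar_spec h).2.1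
  parent_mem _ _ _ _ := or_iff_not_imp_left.mpr (parkingToPar_isSome hb)
  reaches v _ := by
    refine Relation.reflTransGen_of_forall_exists_lt (burnTime (parkingRule E b)) (fun w hw => ?_) v
    obtain ⟨⟨p, k⟩, hpk⟩ := Option.isSome_iff_exists.mp (parkingToPar_isSome hb hw)
    exact ⟨p, ⟨k, hpk⟩, burnTime_lt_of_parkingToPar_eq_some hb hpk⟩

lemma parkingToTree_isSpanning (hb : IsParking E b) : (parkingToTree hb).IsSpanning := by
  intro v
  simp only [Subtree.verts, mem_filter, mem_univ, true_and]
  exact or_iff_not_imp_left.mpr (parkingToPar_isSome hb)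

lemma burnt_treeRule_parkingToTree (hb : IsParking E b) :
    burnt (treeRule (parkingToTree hb)) = burnt (parkingRule E b) :=
  burnt_congr fun t j hj => by
    obtain ⟨⟨p, k⟩, hpk⟩ := Option.isSome_iff_exists.mp
      (parkingToPar_isSome hb (ne_zero_of_notMem_burnt hj))
    exact (parkingRule_iff_treeRule (T := parkingToTree hb)
      (isParking_iff_forall_mem_burnt.mp hb p) hpk (parkingToPar_spec hpk).2.2 t).symm

end ParkingToTree

lemma treeToParking_parkingToTree {b : Fin (n+1) → ℕ} (hb : IsParking E b) (hb0 : b 0 = 0) :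
    treeToParking (parkingToTree hb) = b := by
  funext v
  by_cases hv : v = 0
  · rw [hv, treeToParking_zero, hb0]
  obtain ⟨⟨p, k⟩, hpk⟩ := Option.isSome_iff_exists.mp (parkingToPar_isSome hb hv)
  rw [treeToParking_of_par_eq (T := parkingToTree hb) hpk,
    edgesBurntBefore_congr (burnt_treeRule_parkingToTree hb)]
  exact (parkingToPar_spec hpk).2.2.symm

lemma parkingToTree_treeToParking {T : Subtree n E} (hT : T.IsSpanning) :
    parkingToTree (isParking_treeToParking hT) = T := by
  refine Subtree.ext (funext fun v => ?_)
  change parkingToPar E (treeToParking T) v = T.par v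
  by_cases hv : v = 0
  · rw [hv, parkingToPar_zero, T.root_par]
  obtain ⟨p, k, hpk⟩ := hT.exists_par_eq_some hv
  obtain ⟨⟨q, l⟩, hql⟩ :=
    Option.isSome_iff_exists.mp (parkingToPar_isSome (isParking_treeToParking hT) hv)
  obtain ⟨-, hl, hbl⟩ := parkingToPar_spec hql
  have hbk : treeToParking T v = edgesBurntBefore E (parkingRule E (treeToParking T)) v p + k := by
    rw [treeToParking_of_par_eq hpk, edgesBurntBefore_congr (burnt_parkingRule_treeToParking hT)]
  have hall := isParking_iff_forall_mem_burnt.mp (isParking_treeToParking hT)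
  obtain ⟨rfl, rfl⟩ := eq_of_edgesBurntBefore_add_eq (hall q) (hall p) hl (T.edge_valid v p k hpk)
    (hbl.symm.trans hbk)
  rw [hql, hpk]

/-- The number of `G`-parking functions equals the number of spanning trees of
`G` rooted at `0`. -/
theorem stmt_4 (n : ℕ) (E : Fin (n+1) → Fin (n+1) → ℕ) :
    Nat.card {b : Fin (n+1) → ℕ // IsParking E b ∧ b 0 = 0} =
      Nat.card {T : Subtree n E // T.IsSpanning} :=
  Nat.card_congr
    { toFun := fun b => ⟨parkingToTree b.2.1, parkingToTree_isSpanning b.2.1⟩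
      invFun := fun T => ⟨treeToParking T.1, isParking_treeToParking T.2, treeToParking_zero T.1⟩
      left_inv := fun ⟨_, hb, hb0⟩ => Subtype.ext (treeToParking_parkingToTree hb hb0)
      right_inv := fun ⟨_, hT⟩ => Subtype.ext (parkingToTree_treeToParking hT) }
end

section
/- Let G be a directed graph on {0,...,n}, let T be a spanning tree of G rooted at 0, and let π be a total order on vertices of T such that i <_π j whenever (j,i) is an edge of T (each vertex is larger than its parent). For each j ∈ {1,...,n}, let e_j = (j, p(j)) be the tree edge out of j, and define b_j as the number of edges of G from j to a vertex strictly smaller than p(j) in π, plus the number of fixed-order-smaller parallel copies of edges from j to p(j). Then (b_1,...,b_n) is a G-parking function. -/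
open Finset

open scoped Classical

/-- Given a spanning tree `T` rooted at `0` and a strict total order `r` on the
vertices in which every vertex is larger than its parent, the tuple `b` whose
entry at `j` counts the edges of `G` from `j` to vertices `r`-smaller than the
parent of `j`, plus the number of fixed-order-smaller parallel copies of the
tree edge, is a `G`-parking function. -/
theorem stmt_5 (n : ℕ) (E : Fin (n+1) → Fin (n+1) → ℕ)
    (T : Subtree n E) (hT : T.IsSpanning)
    (r : Fin (n+1) → Fin (n+1) → Prop)
    (hirr : ∀ i, ¬ r i i)
    (htrans : ∀ i j l, r i j → r j l → r i l)
    (htot : ∀ i j : Fin (n+1), i ≠ j → r i j ∨ r j i)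
    (hpar : ∀ j q k, T.par j = some (q, k) → r q j)
    (b : Fin (n+1) → ℕ) (hb0 : b 0 = 0)
    (hb : ∀ j q k, T.par j = some (q, k) →
      b j = (∑ i ∈ Finset.univ.filter (fun i => r i q), E j i) + k) :
    IsParking E b := by
  intro U hU h0U
  -- well-founded minimum of U with respect to r
  haveI : IsTrans (Fin (n+1)) r := ⟨htrans⟩
  haveI : IsIrrefl (Fin (n+1)) r := ⟨hirr⟩
  have wf : WellFounded r := Finite.wellFounded_of_trans_of_irrefl r
  obtain ⟨j, hjU, hmin⟩ := wf.has_min (↑U) (by exact_mod_cast hU)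
  have hj0 : j ≠ 0 := fun h => h0U (h ▸ hjU)
  have hsome : (T.par j).isSome := by
    have := hT j
    simp only [Subtree.verts, Finset.mem_filter] at this
    tauto
  obtain ⟨⟨q, k⟩, hqk⟩ := Option.isSome_iff_exists.mp hsome
  have hrqj : r q j := hpar j q k hqk
  have hqU : q ∉ U := fun h => hmin q h hrqj
  refine ⟨j, hjU, ?_⟩
  rw [hb j q k hqk]
  set A := Finset.univ.filter (fun i => r i q) with hA
  have hAsub : A ⊆ Uᶜ \ {q} := by
    intro i hi
    simp only [hA, Finset.mem_filter] at hi
    have hriq : r i q := hi.2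
    have hrij : r i j := htrans i q j hriq hrqj
    have hiU : i ∉ U := fun h => hmin i h hrij
    simp only [Finset.mem_sdiff, Finset.mem_compl, Finset.mem_singleton]
    exact ⟨hiU, fun h => hirr q (h ▸ hriq)⟩
  have hqUc : q ∈ Uᶜ := Finset.mem_compl.mpr hqU
  have hsplit : ∑ i ∈ Uᶜ, E j i = ∑ i ∈ Uᶜ \ {q}, E j i + E j q :=
    (Finset.sum_eq_sum_sdiff_singleton_add hqUc _).trans rfl
  have h1 : ∑ i ∈ A, E j i ≤ ∑ i ∈ Uᶜ \ {q}, E j i :=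
    Finset.sum_le_sum_of_subset hAsub
  have h2 : k < E j q := T.edge_valid j q k hqk
  omega
end

section
/- Let ≺ be a partial order on the set A_G of directed paths in G ending at 0 with distinct non-root intermediate vertices, satisfying: (i) any two paths whose intersection is itself such a path are comparable; (ii) every proper initial segment (as a path from the root outward) of a path is ≺-smaller than the path. For a tree T rooted at 0, define i <_T j iff A_T(i) ≺ A_T(j), where A_T(v) is the unique path in T from v to 0. Then for every T: <_T is a total order on vertices of T; if (j,i) is an edge of T then i <_T j; and for any rooted subtree t of T, the order on t agrees with the restriction of the order on T. -/
open Finset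

open scoped Classical

/-- `L = [σ₁, ..., σₗ]` is a directed path `⟨σ₁,...,σₗ⟩` of `G` ending at the
root: the vertices `σ₁,...,σₗ` are distinct and non-root, and `G` has edges
`(σ₁,0), (σ₂,σ₁), ..., (σₗ,σₗ₋₁)`. -/
def IsRootPath {n : ℕ} (E : Fin (n+1) → Fin (n+1) → ℕ)
    (L : List (Fin (n+1))) : Prop :=
  ((0 : Fin (n+1)) :: L).Nodup ∧
    List.Chain' (fun a c => 0 < E c a) ((0 : Fin (n+1)) :: L)


/-!
The tree path `A_T(v)` is a root path of `G` ending in `v`, so distinct vertices have distinct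
paths, and every vertex on it has its own tree path as a prefix of it. Hence `A_T(i) ∩ A_T(j)` is
the tree path of the deepest common ancestor of `i` and `j`, again a root path, and condition (i)
makes `A_T(i)`, `A_T(j)` comparable; irreflexivity and transitivity are inherited from `≺`. The
path of a parent is a proper prefix of the path of its child, so (ii) puts parents first. Finally,
a rooted subtree assigns to each of its vertices the same path as `T`, so the orders agree.
-/

namespace Subtree

variable {n : ℕ} {E : Fin (n+1) → Fin (n+1) → ℕ}

theorem mem_verts_of_par_eq_some {t : Subtree n E} {v q : Fin (n+1)} {k : ℕ}
    (h : t.par v = some (q, k)) : v ∈ t.verts :=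
  mem_verts.mpr (Or.inr (by simp [h]))

theorem parent_mem_verts {t : Subtree n E} {v q : Fin (n+1)} {k : ℕ}
    (h : t.par v = some (q, k)) : q ∈ t.verts :=
  mem_verts.mpr (t.parent_mem v q k h)

theorem induction_on_verts (t : Subtree n E) {P : Fin (n+1) → Prop} (root : P 0)
    (step : ∀ v q k, t.par v = some (q, k) → P q → P v) : ∀ v ∈ t.verts, P v := by
  simp only [mem_verts]
  rintro v (rfl | hv)
  · exact root
  have hreach := t.reaches v hv
  clear hv
  induction hreach using Relation.ReflTransGen.head_induction_on with
  | refl => exact root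
  | head hvq _ ih =>
    obtain ⟨k, hpar⟩ := hvq
    exact step _ _ k hpar ih

/-- `A v` is the path `A_T(v)` of the paper, listed from the root outward. -/
def IsPathFn (t : Subtree n E) (A : Fin (n+1) → List (Fin (n+1))) : Prop :=
  A 0 = [] ∧ ∀ v q k, t.par v = some (q, k) → A v = A q ++ [v]

variable {T : Subtree n E} {A : Fin (n+1) → List (Fin (n+1))}

namespace IsPathFn

theorem getLast?_cons_zero (hA : T.IsPathFn A) :
    ∀ v ∈ T.verts, ((0 : Fin (n+1)) :: A v).getLast? = some v :=
  T.induction_on_verts (by simp [hA.1]) fun v q k hpar _ => by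
    rw [hA.2 v q k hpar, ← List.cons_append, List.getLast?_concat]

theorem injOn (hA : T.IsPathFn A) {i j : Fin (n+1)} (hi : i ∈ T.verts) (hj : j ∈ T.verts)
    (h : A i = A j) : i = j := by
  have hlast := hA.getLast?_cons_zero i hi
  rw [h, hA.getLast?_cons_zero j hj] at hlast
  exact (Option.some_injective _ hlast).symm

theorem mem_self (hA : T.IsPathFn A) {v : Fin (n+1)} (hv : v ∈ T.verts) (hv0 : v ≠ 0) :
    v ∈ A v :=
  (List.mem_cons.mp (List.mem_of_getLast? (hA.getLast?_cons_zero v hv))).resolve_left hv0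

theorem prefix_of_mem (hA : T.IsPathFn A) :
    ∀ v ∈ T.verts, ∀ u ∈ A v, u ∈ T.verts ∧ A u <+: A v :=
  T.induction_on_verts (by simp [hA.1]) fun v q k hpar ih u hu => by
    rw [hA.2 v q k hpar] at hu ⊢
    rcases List.mem_append.mp hu with hu | hu
    · exact ⟨(ih u hu).1, (ih u hu).2.trans (List.prefix_append _ _)⟩
    · obtain rfl := List.mem_singleton.mp hu
      exact ⟨mem_verts_of_par_eq_some hpar, (hA.2 u q k hpar) ▸ List.prefix_refl _⟩

theorem isRootPath (hA : T.IsPathFn A) : ∀ v ∈ T.verts, IsRootPath E (A v) :=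
  T.induction_on_verts ⟨by simp [hA.1], by rw [hA.1]; exact List.isChain_singleton 0⟩
    fun v q k hpar ⟨hnodup, hchain⟩ => by
      have hq := parent_mem_verts hpar
      have hv0 : v ≠ 0 := by
        rintro rfl
        simp [T.root_par] at hpar
      -- a vertex on `A q` has a path no longer than `A q`, while `A v` is longer
      have hvq : v ∉ A q := fun hv => by
        have := (hA.prefix_of_mem q hq v hv).2.length_le
        simp [hA.2 v q k hpar] at this
      rw [hA.2 v q k hpar]
      show ((0 :: A q) ++ [v]).Nodup ∧ List.IsChain _ ((0 :: A q) ++ [v])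
      refine ⟨List.nodup_append.mpr ⟨hnodup, List.nodup_singleton v, ?_⟩, ?_⟩
      · rintro a ha b hb rfl
        obtain rfl := List.mem_singleton.mp hb
        exact (List.mem_cons.mp ha).elim hv0 hvq
      · refine List.isChain_append.mpr ⟨hchain, List.isChain_singleton v, ?_⟩
        simp only [hA.getLast?_cons_zero q hq, Option.mem_def, Option.some.injEq, List.head?_cons]
        rintro _ rfl _ rfl
        exact Nat.zero_lt_of_lt (T.edge_valid v q k hpar)

theorem exists_isRootPath_inter (hA : T.IsPathFn A) {i j : Fin (n+1)}
    (hi : i ∈ T.verts) (hj : j ∈ T.verts) :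
    ∃ M, IsRootPath E M ∧ ∀ v, v ∈ M ↔ v ∈ A i ∧ v ∈ A j := by
  -- `M` is the path of the deepest common ancestor of `i` and `j`
  set C := T.verts.filter fun w => A w <+: A i ∧ A w <+: A j
  have hC : C.Nonempty := ⟨0, by simp [C, hA.1, mem_verts]⟩
  obtain ⟨w, hwC, hmax⟩ := C.exists_max_image (fun w => (A w).length) hC
  simp only [C, Finset.mem_filter] at hwC
  refine ⟨A w, hA.isRootPath w hwC.1,
    fun v => ⟨fun hv => ⟨hwC.2.1.mem hv, hwC.2.2.mem hv⟩, ?_⟩⟩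
  rintro ⟨hvi, hvj⟩
  obtain ⟨hv, hvi'⟩ := hA.prefix_of_mem i hi v hvi
  have hvC : v ∈ C := by simp [C, hv, hvi', (hA.prefix_of_mem j hj v hvj).2]
  have hv0 : v ≠ 0 := by
    rintro rfl
    exact (List.nodup_cons.mp (hA.isRootPath i hi).1).1 hvi
  exact (List.prefix_of_prefix_length_le hvi' hwC.2.1 (hmax v hvC)).mem (hA.mem_self hv hv0)

theorem prefix_parent (hA : T.IsPathFn A) {v q : Fin (n+1)} {k : ℕ}
    (hpar : T.par v = some (q, k)) : A q <+: A v ∧ A q ≠ A v := by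
  rw [hA.2 v q k hpar]
  exact ⟨List.prefix_append _ _, fun h => by simpa using congrArg List.length h⟩

theorem eq_of_isSubtreeOf {t : Subtree n E} {A' : Fin (n+1) → List (Fin (n+1))}
    (hA : T.IsPathFn A) (hA' : t.IsPathFn A') (ht : t.IsSubtreeOf T) :
    ∀ v ∈ t.verts, A' v = A v :=
  t.induction_on_verts (by rw [hA'.1, hA.1]) fun v q k hpar ih => by
    rw [hA'.2 v q k hpar, hA.2 v q k ((ht v (by simp [hpar])).symm.trans hpar), ih]

end IsPathFn

end Subtree

/-- Any partial order `prec` on the set of root-paths of `G` such that paths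
whose intersection is a root-path are comparable, and proper initial segments
are smaller, induces a proper set of tree orders: for a tree `T` with path
function `A` (sending each vertex to its tree path to the root), comparing
`A i` and `A j` gives a strict total order on the vertices of `T` in which
parents are smaller, consistently under restriction to rooted subtrees. -/
theorem stmt_10 (n : ℕ) (E : Fin (n+1) → Fin (n+1) → ℕ)
    (prec : List (Fin (n+1)) → List (Fin (n+1)) → Prop)
    (hirr : ∀ L, IsRootPath E L → ¬ prec L L)
    (htrans : ∀ L L' L'', IsRootPath E L → IsRootPath E L' → IsRootPath E L'' →
      prec L L' → prec L' L'' → prec L L'')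
    (hcomp : ∀ L L', IsRootPath E L → IsRootPath E L' →
      (∃ M, IsRootPath E M ∧ ∀ v, v ∈ M ↔ (v ∈ L ∧ v ∈ L')) →
      L = L' ∨ prec L L' ∨ prec L' L)
    (hpre : ∀ L L', IsRootPath E L → L' <+: L → L' ≠ L → prec L' L)
    (T : Subtree n E) (A : Fin (n+1) → List (Fin (n+1)))
    (hA0 : A 0 = []) (hA : ∀ v q k, T.par v = some (q, k) → A v = A q ++ [v]) :
    (∀ i ∈ T.verts, ¬ prec (A i) (A i)) ∧
    (∀ i ∈ T.verts, ∀ j ∈ T.verts, ∀ l ∈ T.verts,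
        prec (A i) (A j) → prec (A j) (A l) → prec (A i) (A l)) ∧
    (∀ i ∈ T.verts, ∀ j ∈ T.verts, i ≠ j → prec (A i) (A j) ∨ prec (A j) (A i)) ∧
    (∀ j q k, T.par j = some (q, k) → prec (A q) (A j)) ∧
    (∀ t : Subtree n E, t.IsSubtreeOf T →
      ∀ A' : Fin (n+1) → List (Fin (n+1)), A' 0 = [] →
        (∀ v q k, t.par v = some (q, k) → A' v = A' q ++ [v]) →
        ∀ i ∈ t.verts, ∀ j ∈ t.verts, (prec (A' i) (A' j) ↔ prec (A i) (A j))) := by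
  have hP : T.IsPathFn A := ⟨hA0, hA⟩
  refine ⟨fun i hi => hirr _ (hP.isRootPath i hi),
    fun i hi j hj l hl =>
      htrans _ _ _ (hP.isRootPath i hi) (hP.isRootPath j hj) (hP.isRootPath l hl),
    fun i hi j hj hij => ?_, fun j q k hpar => ?_, fun t ht A' hA'0 hA' i hi j hj => ?_⟩
  · rcases hcomp _ _ (hP.isRootPath i hi) (hP.isRootPath j hj)
      (hP.exists_isRootPath_inter hi hj) with h | h
    · exact absurd (hP.injOn hi hj h) hij
    · exact h
  · obtain ⟨hprefix, hne⟩ := hP.prefix_parent hpar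
    exact hpre _ _ (hP.isRootPath j (Subtree.mem_verts_of_par_eq_some hpar)) hprefix hne
  · have hsame := hP.eq_of_isSubtreeOf ⟨hA'0, hA'⟩ ht
    rw [hsame i hi, hsame j hj]
end

section
/- There exists a graph G and a proper set of tree orders Π on the subtrees of G that is not induced by any partial order ≺ on the path set A_G satisfying conditions (i) and (ii). Concretely: let G have vertices 0,1,2,3,4 with single edges (1,0), (2,0), two parallel edges e_1,e_2 from 3 to 1, and two parallel edges f_1,f_2 from 4 to 2; assigning to the spanning tree T_{ij} (containing e_i and f_j) the order with 3 before 4 when i ≠ j and 4 before 3 when i = j gives a proper set of tree orders not of the form π_≺. -/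
open Finset

open scoped Classical

/-- An assignment of a relation on vertices to every rooted subtree. -/
structure TreeOrders (n : ℕ) (E : Fin (n+1) → Fin (n+1) → ℕ) where
  lt : Subtree n E → Fin (n+1) → Fin (n+1) → Prop

/-- A proper set of tree orders: each `lt T` is a strict total order on the
vertices of `T`, parents are smaller than children, and the orders are
consistent under restriction to rooted subtrees. -/
def TreeOrders.Proper {n : ℕ} {E : Fin (n+1) → Fin (n+1) → ℕ}
    (P : TreeOrders n E) : Prop :=
  (∀ T : Subtree n E, ∀ i ∈ T.verts, ¬ P.lt T i i) ∧
  (∀ T : Subtree n E, ∀ i ∈ T.verts, ∀ j ∈ T.verts, ∀ l ∈ T.verts,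
     P.lt T i j → P.lt T j l → P.lt T i l) ∧
  (∀ T : Subtree n E, ∀ i ∈ T.verts, ∀ j ∈ T.verts, i ≠ j → P.lt T i j ∨ P.lt T j i) ∧
  (∀ T : Subtree n E, ∀ j q k, T.par j = some (q, k) → P.lt T q j) ∧
  (∀ t T : Subtree n E, t.IsSubtreeOf T →
     ∀ i ∈ t.verts, ∀ j ∈ t.verts, (P.lt t i j ↔ P.lt T i j))

/-- The graph on vertices `{0,1,2,3,4}` with single edges `(1,0)`, `(2,0)`,
two parallel edges from `3` to `1`, and two parallel edges from `4` to `2`. -/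
def E12 : Fin 5 → Fin 5 → ℕ := fun v w =>
  if (v, w) = (1, 0) ∨ (v, w) = (2, 0) then 1
  else if (v, w) = (3, 1) ∨ (v, w) = (4, 2) then 2
  else 0

/-- An edge-annotated root-path of the multigraph `E12`: a list of pairs
`(vertex, parallel-edge index)` forming a directed path to the root `0` with
distinct non-root vertices and valid edge indices. -/
def IsEPath (L : List (Fin 5 × ℕ)) : Prop :=
  ((0 : Fin 5) :: L.map Prod.fst).Nodup ∧
    List.Chain' (fun a c : Fin 5 × ℕ => c.2 < E12 c.1 a.1)
      (((0 : Fin 5), 0) :: L)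

/-!
Rank the vertices of every subtree by `0 < 1 < 2 < 3 < 4`, exchanging `3` and `4` when the
tree attaches them by parallel edges of the same index. Two vertices of a subtree `t ⊆ T` are
ranked alike in `t` and `T` unless they are `3` and `4`, and then `t` and `T` share the edges at
`3` and `4`; so these orders are proper. A relation `≺` on root paths inducing them would satisfy
`A_{e_i} ≺ A_{f_j}` for `i ≠ j` (in `T_{ij}`) and `A_{f_i} ≺ A_{e_i}` (in `T_{ii}`), hence
`A_{e_0} ≺ A_{f_1} ≺ A_{e_1} ≺ A_{f_0} ≺ A_{e_0}`.
-/

namespace TreeOrders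

variable {n : ℕ} {E : Fin (n+1) → Fin (n+1) → ℕ} {α : Type*} [LinearOrder α]

def ofRank (r : Subtree n E → Fin (n+1) → α) : TreeOrders n E :=
  ⟨fun T i j => r T i < r T j⟩

theorem proper_ofRank (r : Subtree n E → Fin (n+1) → α)
    (hinj : ∀ T, Set.InjOn (r T) T.verts)
    (hpar : ∀ T j q k, T.par j = some (q, k) → r T q < r T j)
    (hres : ∀ t T : Subtree n E, t.IsSubtreeOf T →
      ∀ i ∈ t.verts, ∀ j ∈ t.verts, (r t i < r t j ↔ r T i < r T j)) :
    (ofRank r).Proper := by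
  refine ⟨fun T i _ => lt_irrefl _, fun T i _ j _ l _ => lt_trans, ?_, hpar, hres⟩
  intro T i hi j hj hij
  exact lt_or_gt_of_ne fun h => hij (hinj T hi hj h)

end TreeOrders

theorem Subtree.par_eq_of_isSubtreeOf {n : ℕ} {E : Fin (n+1) → Fin (n+1) → ℕ}
    {t T : Subtree n E} (h : t.IsSubtreeOf T) {v : Fin (n+1)} (hv : v ∈ t.verts)
    (hv0 : v ≠ 0) : t.par v = T.par v := by
  simp only [Subtree.verts, Finset.mem_filter, Finset.mem_univ, true_and] at hv
  exact h v (hv.resolve_left hv0)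

theorem E12_three_pos_iff {p : Fin 5} : 0 < E12 3 p ↔ p = 1 := by
  revert p; decide

theorem E12_four_pos_iff {p : Fin 5} : 0 < E12 4 p ↔ p = 2 := by
  revert p; decide

/-- `T` attaches `3` and `4` by parallel edges with the same index, as in `T_{ii}`. -/
def Subtree.Matched (T : Subtree 4 E12) : Prop :=
  ∃ k, T.par 3 = some (1, k) ∧ T.par 4 = some (2, k)

theorem Subtree.matched_iff {T : Subtree 4 E12} {k₃ k₄ : ℕ}
    (h₃ : T.par 3 = some (1, k₃)) (h₄ : T.par 4 = some (2, k₄)) :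
    T.Matched ↔ k₃ = k₄ := by
  simp [Subtree.Matched, h₃, h₄, eq_comm]

theorem Subtree.matched_iff_of_isSubtreeOf {t T : Subtree 4 E12} (h : t.IsSubtreeOf T)
    (h₃ : 3 ∈ t.verts) (h₄ : 4 ∈ t.verts) : t.Matched ↔ T.Matched := by
  simp only [Subtree.Matched, Subtree.par_eq_of_isSubtreeOf h h₃ (by decide),
    Subtree.par_eq_of_isSubtreeOf h h₄ (by decide)]

def swapRank (b : Bool) (v : Fin 5) : ℕ :=
  if v = 3 then (if b then 4 else 3)
  else if v = 4 then (if b then 3 else 4)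
  else v

theorem swapRank_injective (b : Bool) : Function.Injective (swapRank b) := by
  revert b; decide

theorem swapRank_lt_of_E12_pos {b : Bool} {v p : Fin 5} (h : 0 < E12 v p) :
    swapRank b p < swapRank b v := by
  revert b v p; decide

theorem swapRank_lt_iff_swapRank_lt {i j : Fin 5} (h₃₄ : ¬(i = 3 ∧ j = 4))
    (h₄₃ : ¬(i = 4 ∧ j = 3)) (b b' : Bool) :
    swapRank b i < swapRank b j ↔ swapRank b' i < swapRank b' j := by
  revert i j b b'; decide

theorem swapRank_three_lt_four_iff (b : Bool) : swapRank b 3 < swapRank b 4 ↔ b = false := by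
  revert b; decide

theorem swapRank_four_lt_three_iff (b : Bool) : swapRank b 4 < swapRank b 3 ↔ b = true := by
  revert b; decide

noncomputable def matchedSwapOrders : TreeOrders 4 E12 :=
  TreeOrders.ofRank fun T => swapRank (decide T.Matched)

theorem matchedSwapOrders_lt_iff {T : Subtree 4 E12} {i j : Fin 5} :
    matchedSwapOrders.lt T i j ↔ swapRank (decide T.Matched) i < swapRank (decide T.Matched) j :=
  Iff.rfl

theorem matchedSwapOrders_proper : matchedSwapOrders.Proper := by
  refine TreeOrders.proper_ofRank _ (fun T => (swapRank_injective _).injOn)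
    (fun T j q k h => swapRank_lt_of_E12_pos (Nat.zero_lt_of_lt (T.edge_valid j q k h))) ?_
  intro t T h i hi j hj
  by_cases h₃₄ : i = 3 ∧ j = 4 ∨ i = 4 ∧ j = 3
  · have hm : t.Matched ↔ T.Matched := by
      rcases h₃₄ with ⟨rfl, rfl⟩ | ⟨rfl, rfl⟩
      · exact Subtree.matched_iff_of_isSubtreeOf h hi hj
      · exact Subtree.matched_iff_of_isSubtreeOf h hj hi
    simp only [hm]
  · exact swapRank_lt_iff_swapRank_lt (fun h => h₃₄ (.inl h)) (fun h => h₃₄ (.inr h)) _ _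

theorem matchedSwapOrders_spanning (T : Subtree 4 E12) (p₃ : Fin 5) (k₃ : ℕ) (p₄ : Fin 5)
    (k₄ : ℕ) (h₃ : T.par 3 = some (p₃, k₃)) (h₄ : T.par 4 = some (p₄, k₄)) :
    matchedSwapOrders.lt T 0 1 ∧ matchedSwapOrders.lt T 1 2 ∧ matchedSwapOrders.lt T 2 3 ∧
      matchedSwapOrders.lt T 2 4 ∧ (matchedSwapOrders.lt T 3 4 ↔ k₃ ≠ k₄) := by
  obtain rfl := E12_three_pos_iff.mp (Nat.zero_lt_of_lt (T.edge_valid _ _ _ h₃))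
  obtain rfl := E12_four_pos_iff.mp (Nat.zero_lt_of_lt (T.edge_valid _ _ _ h₄))
  have hlow (b : Bool) : swapRank b 0 < swapRank b 1 ∧ swapRank b 1 < swapRank b 2 ∧
      swapRank b 2 < swapRank b 3 ∧ swapRank b 2 < swapRank b 4 := by
    revert b; decide
  simpa [matchedSwapOrders_lt_iff, swapRank_three_lt_four_iff, Subtree.matched_iff h₃ h₄]
    using hlow (decide T.Matched)

/-- The spanning tree `T_{ij}`, using the `i`-th edge from `3` and the `j`-th edge from `4`. -/
def spanningTree (i j : Fin 2) : Subtree 4 E12 where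
  par v :=
    if v = 1 ∨ v = 2 then some (0, 0)
    else if v = 3 then some (1, i)
    else if v = 4 then some (2, j)
    else none
  root_par := by simp
  edge_valid := by
    intro v p k h
    fin_cases v <;> simp at h <;> obtain ⟨rfl, rfl⟩ := h <;> simp [E12] <;> omega
  parent_mem := by
    intro v p k h
    fin_cases v <;> simp_all [Prod.ext_iff]
  reaches := by
    intro v hv
    fin_cases v
    · simp at hv
    · exact .single ⟨0, by simp⟩
    · exact .single ⟨0, by simp⟩
    · exact .head (b := 1) ⟨i, by simp⟩ (.single ⟨0, by simp⟩)
    · exact .head (b := 2) ⟨j, by simp⟩ (.single ⟨0, by simp⟩)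

theorem mem_spanningTree_verts (i j : Fin 2) (v : Fin 5) : v ∈ (spanningTree i j).verts := by
  fin_cases v <;> simp [Subtree.verts, spanningTree]

theorem spanningTree_matched_iff (i j : Fin 2) : (spanningTree i j).Matched ↔ i = j := by
  rw [Subtree.matched_iff (k₃ := i) (k₄ := j) (by simp [spanningTree])
    (by simp [spanningTree]), Fin.val_inj]

theorem spanningTree_lt_three_four_iff (i j : Fin 2) :
    matchedSwapOrders.lt (spanningTree i j) 3 4 ↔ i ≠ j := by
  simp [matchedSwapOrders_lt_iff, swapRank_three_lt_four_iff, spanningTree_matched_iff]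

theorem spanningTree_lt_four_three_iff (i j : Fin 2) :
    matchedSwapOrders.lt (spanningTree i j) 4 3 ↔ i = j := by
  simp [matchedSwapOrders_lt_iff, swapRank_four_lt_three_iff, spanningTree_matched_iff]

/-- The path `A_{e_i}` of the paper (with edges indexed from `0`). -/
def pathThree (i : Fin 2) : List (Fin 5 × ℕ) := [(1, 0), (3, i)]

/-- The path `A_{f_j}` of the paper. -/
def pathFour (j : Fin 2) : List (Fin 5 × ℕ) := [(2, 0), (4, j)]

theorem isEPath_pathThree (i : Fin 2) : IsEPath (pathThree i) := by
  refine ⟨by simp [pathThree], ?_⟩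
  show List.IsChain _ (_ :: pathThree i)
  simp [pathThree, E12]
  omega

theorem isEPath_pathFour (j : Fin 2) : IsEPath (pathFour j) := by
  refine ⟨by simp [pathFour], ?_⟩
  show List.IsChain _ (_ :: pathFour j)
  simp [pathFour, E12]
  omega

def spanningTreePaths (i j : Fin 2) (v : Fin 5) : List (Fin 5 × ℕ) :=
  if v = 1 then [(1, 0)]
  else if v = 2 then [(2, 0)]
  else if v = 3 then pathThree i
  else if v = 4 then pathFour j
  else []

theorem spanningTreePaths_spec (i j : Fin 2) :
    spanningTreePaths i j 0 = [] ∧ ∀ v q k, (spanningTree i j).par v = some (q, k) →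
      spanningTreePaths i j v = spanningTreePaths i j q ++ [(v, k)] := by
  refine ⟨rfl, fun v q k h => ?_⟩
  fin_cases v <;> simp [spanningTree] at h <;> obtain ⟨rfl, rfl⟩ := h <;> rfl

theorem not_induced_matchedSwapOrders (prec : List (Fin 5 × ℕ) → List (Fin 5 × ℕ) → Prop)
    (hirr : ∀ L, IsEPath L → ¬ prec L L)
    (htrans : ∀ L L' L'', IsEPath L → IsEPath L' → IsEPath L'' →
      prec L L' → prec L' L'' → prec L L'')
    (hind : ∀ (T : Subtree 4 E12) (A : Fin 5 → List (Fin 5 × ℕ)),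
      (A 0 = [] ∧ ∀ v q k, T.par v = some (q, k) → A v = A q ++ [(v, k)]) →
      ∀ i ∈ T.verts, ∀ j ∈ T.verts, (matchedSwapOrders.lt T i j ↔ prec (A i) (A j))) :
    False := by
  have hinduced (i j : Fin 2) (u v : Fin 5) (h : matchedSwapOrders.lt (spanningTree i j) u v) :
      prec (spanningTreePaths i j u) (spanningTreePaths i j v) :=
    (hind _ _ (spanningTreePaths_spec i j) u (mem_spanningTree_verts i j u) v
      (mem_spanningTree_verts i j v)).mp h
  have hmixed (i j : Fin 2) (hij : i ≠ j) : prec (pathThree i) (pathFour j) :=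
    hinduced i j 3 4 ((spanningTree_lt_three_four_iff i j).mpr hij)
  have hdiag (i : Fin 2) : prec (pathFour i) (pathThree i) :=
    hinduced i i 4 3 ((spanningTree_lt_four_three_iff i i).mpr rfl)
  have hthree (i j : Fin 2) (hij : i ≠ j) : prec (pathThree i) (pathThree j) :=
    htrans _ _ _ (isEPath_pathThree i) (isEPath_pathFour j) (isEPath_pathThree j)
      (hmixed i j hij) (hdiag j)
  exact hirr _ (isEPath_pathThree 0) (htrans _ _ _ (isEPath_pathThree 0)
    (isEPath_pathThree 1) (isEPath_pathThree 0) (hthree 0 1 (by decide))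
    (hthree 1 0 (by decide)))

/-- There is a proper set of tree orders on the subtrees of `E12` which on
each spanning tree `T_{ij}` (using the `i`-th edge from `3` and `j`-th edge
from `4`) orders `0 < 1 < 2` and puts `3` before `4` exactly when `i ≠ j`,
and which is not induced by any partial order `prec` on the root-paths
satisfying: comparability of paths with path intersection, and initial
segments are smaller. -/
theorem stmt_12 :
    ∃ P : TreeOrders 4 E12, P.Proper ∧
      (∀ T : Subtree 4 E12, T.IsSpanning → ∀ p3 k3 p4 k4,
        T.par 3 = some (p3, k3) → T.par 4 = some (p4, k4) →
        (P.lt T 0 1 ∧ P.lt T 1 2 ∧ P.lt T 2 3 ∧ P.lt T 2 4 ∧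
          (P.lt T 3 4 ↔ k3 ≠ k4))) ∧
      ¬ ∃ prec : List (Fin 5 × ℕ) → List (Fin 5 × ℕ) → Prop,
        (∀ L, IsEPath L → ¬ prec L L) ∧
        (∀ L L' L'', IsEPath L → IsEPath L' → IsEPath L'' →
          prec L L' → prec L' L'' → prec L L'') ∧
        (∀ L L', IsEPath L → IsEPath L' →
          (∃ M, IsEPath M ∧ ∀ x, x ∈ M ↔ (x ∈ L ∧ x ∈ L')) →
          L = L' ∨ prec L L' ∨ prec L' L) ∧
        (∀ L L', IsEPath L → L' <+: L → L' ≠ L → prec L' L) ∧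
        (∀ (T : Subtree 4 E12) (A : Fin 5 → List (Fin 5 × ℕ)),
          (A 0 = [] ∧ ∀ v q k, T.par v = some (q, k) → A v = A q ++ [(v, k)]) →
          ∀ i ∈ T.verts, ∀ j ∈ T.verts, (P.lt T i j ↔ prec (A i) (A j))) := by
  refine ⟨matchedSwapOrders, matchedSwapOrders_proper,
    fun T _ => matchedSwapOrders_spanning T, ?_⟩
  rintro ⟨prec, hirr, htrans, -, -, hind⟩
  exact not_induced_matchedSwapOrders prec hirr htrans hind
end

section
/- Let G be a digraph on {0,...,n} with a proper set of tree orders Π, and let P = (b_1,...,b_n) be a G-parking function. In the inductive construction of Φ(P) — where t_0 = {0}, and at step m one adjoins to t_{m-1} the π-smallest eligible vertex p_m among all vertices j outside t_{m-1} having at least b_j+1 edges into t_{m-1}, via the (b_j+1)-th smallest such edge — the resulting sequence satisfies p_0 <_{π(T)} p_1 <_{π(T)} ... <_{π(T)} p_n, where T = t_n. -/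
open Finset

open scoped Classical

/-- The number of edges out of `j` that are smaller (w.r.t. the order `lt` on
targets, parallel edges broken by their index) than the edge `(j,q)` with
parallel index `k`. -/
noncomputable def thetaVal {n : ℕ} (E : Fin (n+1) → Fin (n+1) → ℕ)
    (lt : Fin (n+1) → Fin (n+1) → Prop) (j q : Fin (n+1)) (k : ℕ) : ℕ :=
  (∑ i ∈ Finset.univ.filter (fun i => lt i q), E j i) + k

/-- The map Θ: given a tree order assignment, send a tree to the tuple whose
`j`-th entry counts the edges out of `j` smaller than the tree edge out of `j`. -/
noncomputable def Theta {n : ℕ} (E : Fin (n+1) → Fin (n+1) → ℕ)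
    (P : TreeOrders n E) (T : Subtree n E) : Fin (n+1) → ℕ :=
  fun j => match T.par j with
  | none => 0
  | some (q, k) => thetaVal E (P.lt T) j q k

/-- `(q,k)` is the edge from `j` into the vertex set `S` such that exactly
`bj` edges from `j` into `S` are smaller than it (w.r.t. `lt`, parallel edges
broken by index). -/
def ChosenEdge {n : ℕ} (E : Fin (n+1) → Fin (n+1) → ℕ) (S : Finset (Fin (n+1)))
    (lt : Fin (n+1) → Fin (n+1) → Prop) (bj : ℕ) (j q : Fin (n+1)) (k : ℕ) : Prop :=
  q ∈ S ∧ k < E j q ∧ (∑ i ∈ S.filter (fun i => lt i q), E j i) + k = bj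

/-- A run of the inductive construction of Φ(b): start with the tree on the
root alone; at step `m` consider the set `V_m` of vertices `j` outside
`t (m-1)` with at least `b j + 1` edges into `t (m-1)`, adjoin all of them by
their chosen edges to form an auxiliary tree, and let `p m` be the smallest
vertex of `V_m` in the order of that auxiliary tree; `t m` is `t (m-1)` with
`p m` adjoined by its chosen edge. -/
structure PhiRun {n : ℕ} (E : Fin (n+1) → Fin (n+1) → ℕ) (P : TreeOrders n E)
    (b : Fin (n+1) → ℕ) where
  t : ℕ → Subtree n E
  p : ℕ → Fin (n+1)
  init : ∀ v, (t 0).par v = none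
  p0 : p 0 = 0
  sub : ∀ m, 1 ≤ m → m ≤ n → (t (m-1)).IsSubtreeOf (t m)
  newvert : ∀ m, 1 ≤ m → m ≤ n → p m ∉ (t (m-1)).verts ∧
      ∀ v, v ≠ p m → (t m).par v = (t (m-1)).par v
  eligible : ∀ m, 1 ≤ m → m ≤ n →
      b (p m) + 1 ≤ ∑ i ∈ (t (m-1)).verts, E (p m) i
  chosen : ∀ m, 1 ≤ m → m ≤ n → ∃ q k, (t m).par (p m) = some (q, k) ∧
      ChosenEdge E (t (m-1)).verts (P.lt (t (m-1))) (b (p m)) (p m) q k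
  minimal : ∀ m, 1 ≤ m → m ≤ n → ∃ taux : Subtree n E,
      (t (m-1)).IsSubtreeOf taux ∧
      (∀ j, j ∈ taux.verts ↔ (j ∈ (t (m-1)).verts ∨
          (j ∉ (t (m-1)).verts ∧ b j + 1 ≤ ∑ i ∈ (t (m-1)).verts, E j i))) ∧
      (∀ j, j ∉ (t (m-1)).verts → b j + 1 ≤ ∑ i ∈ (t (m-1)).verts, E j i →
        ∃ q k, taux.par j = some (q, k) ∧
          ChosenEdge E (t (m-1)).verts (P.lt (t (m-1))) (b j) j q k) ∧
      (∀ j, j ∉ (t (m-1)).verts → b j + 1 ≤ ∑ i ∈ (t (m-1)).verts, E j i →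
        j ≠ p m → P.lt taux (p m) j)


section AuxStmt13

variable {n : ℕ} {E : Fin (n+1) → Fin (n+1) → ℕ} {P : TreeOrders n E} {b : Fin (n+1) → ℕ}

lemma aux_mem_verts_iff {t : Subtree n E} {v : Fin (n+1)} :
    v ∈ t.verts ↔ v = 0 ∨ (t.par v).isSome := by
  simp [Subtree.verts]

lemma aux_root_mem (t : Subtree n E) : (0 : Fin (n+1)) ∈ t.verts :=
  aux_mem_verts_iff.mpr (Or.inl rfl)

lemma aux_sub_trans {t u v : Subtree n E} (h1 : t.IsSubtreeOf u) (h2 : u.IsSubtreeOf v) :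
    t.IsSubtreeOf v := by
  intro w hw
  rw [h1 w hw]
  exact h2 w (by rw [← h1 w hw]; exact hw)

lemma aux_sub_refl (t : Subtree n E) : t.IsSubtreeOf t := fun _ _ => rfl

lemma aux_verts_mono {t u : Subtree n E} (h : t.IsSubtreeOf u) : t.verts ⊆ u.verts := by
  intro v hv
  rcases aux_mem_verts_iff.mp hv with h0 | hs
  · exact aux_mem_verts_iff.mpr (Or.inl h0)
  · exact aux_mem_verts_iff.mpr (Or.inr (by rw [← h v hs]; exact hs))

lemma aux_chosen_key (S : Finset (Fin (n+1))) (lt : Fin (n+1) → Fin (n+1) → Prop)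
    (hirr : ∀ i ∈ S, ¬ lt i i)
    (htr : ∀ i ∈ S, ∀ j ∈ S, ∀ l ∈ S, lt i j → lt j l → lt i l)
    {bj : ℕ} {j q : Fin (n+1)} {k : ℕ} {q' : Fin (n+1)} {k' : ℕ}
    (h1 : ChosenEdge E S lt bj j q k) (h2 : ChosenEdge E S lt bj j q' k')
    (hlt : lt q q') : False := by
  obtain ⟨hqS, hk, hsum⟩ := h1
  obtain ⟨hq'S, hk', hsum'⟩ := h2
  have hnot : q ∉ S.filter (fun i => lt i q) := by
    simp only [Finset.mem_filter]
    rintro ⟨_, h⟩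
    exact hirr q hqS h
  have hsub : insert q (S.filter (fun i => lt i q)) ⊆ S.filter (fun i => lt i q') := by
    intro i hi
    rcases Finset.mem_insert.mp hi with rfl | hi
    · exact Finset.mem_filter.mpr ⟨hqS, hlt⟩
    · obtain ⟨hiS, hiq⟩ := Finset.mem_filter.mp hi
      exact Finset.mem_filter.mpr ⟨hiS, htr i hiS q hqS q' hq'S hiq hlt⟩
  have h1' : ∑ i ∈ insert q (S.filter (fun i => lt i q)), E j i
      = E j q + ∑ i ∈ S.filter (fun i => lt i q), E j i := Finset.sum_insert hnot
  have h2' : ∑ i ∈ insert q (S.filter (fun i => lt i q)), E j i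
      ≤ ∑ i ∈ S.filter (fun i => lt i q'), E j i :=
    Finset.sum_le_sum_of_subset hsub
  omega

lemma aux_chosen_unique (S : Finset (Fin (n+1))) (lt : Fin (n+1) → Fin (n+1) → Prop)
    (hirr : ∀ i ∈ S, ¬ lt i i)
    (htr : ∀ i ∈ S, ∀ j ∈ S, ∀ l ∈ S, lt i j → lt j l → lt i l)
    (htot : ∀ i ∈ S, ∀ j ∈ S, i ≠ j → lt i j ∨ lt j i)
    {bj : ℕ} {j q : Fin (n+1)} {k : ℕ} {q' : Fin (n+1)} {k' : ℕ}
    (h1 : ChosenEdge E S lt bj j q k) (h2 : ChosenEdge E S lt bj j q' k') :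
    q = q' ∧ k = k' := by
  by_cases hqq : q = q'
  · subst hqq
    refine ⟨rfl, ?_⟩
    have := h1.2.2
    have := h2.2.2
    omega
  · rcases htot q h1.1 q' h2.1 hqq with h | h
    · exact (aux_chosen_key S lt hirr htr h1 h2 h).elim
    · exact (aux_chosen_key S lt hirr htr h2 h1 h).elim

lemma aux_p_mem (r : PhiRun E P b) (a : ℕ) (ha : a ≤ n) : r.p a ∈ (r.t a).verts := by
  rcases Nat.eq_zero_or_pos a with rfl | hpos
  · rw [r.p0]; exact aux_root_mem _
  · obtain ⟨q, k, hpar, _⟩ := r.chosen a hpos ha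
    exact aux_mem_verts_iff.mpr (Or.inr (by rw [hpar]; rfl))

lemma aux_step_verts (r : PhiRun E P b) (m : ℕ) (h1 : 1 ≤ m) (h2 : m ≤ n) (w : Fin (n+1)) :
    w ∈ (r.t m).verts ↔ w = r.p m ∨ w ∈ (r.t (m-1)).verts := by
  by_cases hw : w = r.p m
  · subst hw
    simp only [true_or, iff_true]
    exact aux_p_mem r m h2
  · simp only [hw, false_or]
    have hpar := (r.newvert m h1 h2).2 w hw
    rw [aux_mem_verts_iff, aux_mem_verts_iff, hpar]

lemma aux_sub_chain (r : PhiRun E P b) : ∀ a c : ℕ, a ≤ c → c ≤ n →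
    (r.t a).IsSubtreeOf (r.t c) := by
  intro a c
  induction c with
  | zero => intro h _; rw [Nat.le_zero.mp h]; exact aux_sub_refl _
  | succ c ih =>
    intro h hc
    rcases Nat.lt_or_ge a (c+1) with h' | h'
    · have hsub := r.sub (c+1) (by omega) hc
      simp only [Nat.add_sub_cancel] at hsub
      exact aux_sub_trans (ih (by omega) (by omega)) hsub
    · have : a = c + 1 := by omega
      rw [this]; exact aux_sub_refl _

/-- The consecutive-step comparison: `p m` is smaller than `p (m+1)` in the order
of the tree `t (m+1)`. -/
lemma aux_consec (r : PhiRun E P b) (hP : P.Proper) (m : ℕ) (h2 : m + 1 ≤ n) :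
    P.lt (r.t (m+1)) (r.p m) (r.p (m+1)) := by
  obtain ⟨hirr, htr, htot, hpar, hcons⟩ := hP
  obtain ⟨q, k, hpar1, hch⟩ := r.chosen (m+1) (by omega) h2
  simp only [Nat.add_sub_cancel] at hpar1 hch
  have hqv : P.lt (r.t (m+1)) q (r.p (m+1)) := hpar (r.t (m+1)) (r.p (m+1)) q k hpar1
  rcases Nat.eq_zero_or_pos m with rfl | hm
  · -- base step: the only possible parent is the root
    have hq0 : q = 0 := by
      rcases aux_mem_verts_iff.mp hch.1 with h | h
      · exact h
      · rw [r.init q] at h; simp at h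
    rw [r.p0]
    rwa [hq0] at hqv
  · have hmn : m ≤ n := by omega
    have hnv := r.newvert (m+1) (by omega) h2
    simp only [Nat.add_sub_cancel] at hnv
    have hvnot : r.p (m+1) ∉ (r.t m).verts := hnv.1
    have hpm_mem : r.p m ∈ (r.t m).verts := aux_p_mem r m hmn
    have hq_mem : q ∈ (r.t m).verts := hch.1
    have hsub1 : (r.t m).IsSubtreeOf (r.t (m+1)) := by
      have := r.sub (m+1) (by omega) h2
      simpa only [Nat.add_sub_cancel] using this
    have hpm_mem1 : r.p m ∈ (r.t (m+1)).verts := aux_verts_mono hsub1 hpm_mem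
    have hq_mem1 : q ∈ (r.t (m+1)).verts := aux_verts_mono hsub1 hq_mem
    have hv_mem1 : r.p (m+1) ∈ (r.t (m+1)).verts :=
      aux_mem_verts_iff.mpr (Or.inr (by rw [hpar1]; rfl))
    by_cases hqp : q = r.p m
    · rwa [← hqp]
    · have hqold : q ∈ (r.t (m-1)).verts := by
        rcases (aux_step_verts r m hm hmn q).mp hq_mem with h | h
        · exact absurd h hqp
        · exact h
      have hsubm : (r.t (m-1)).IsSubtreeOf (r.t m) := r.sub m hm hmn
      rcases htot (r.t m) (r.p m) hpm_mem q hq_mem (fun h => hqp h.symm) with hlt | hlt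
      · -- p m < q in t m : conclude by transitivity through the parent q
        have h1 : P.lt (r.t (m+1)) (r.p m) q :=
          (hcons (r.t m) (r.t (m+1)) hsub1 _ hpm_mem _ hq_mem).mp hlt
        exact htr (r.t (m+1)) _ hpm_mem1 _ hq_mem1 _ hv_mem1 h1 hqv
      · -- q < p m in t m : the chosen edge was already available at step m
        set v := r.p (m+1) with hv
        have hfilter : (r.t m).verts.filter (fun i => P.lt (r.t m) i q)
            = (r.t (m-1)).verts.filter (fun i => P.lt (r.t (m-1)) i q) := by
          ext i
          simp only [Finset.mem_filter]
          constructor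
          · rintro ⟨hi, hilt⟩
            have hip : i ≠ r.p m := by
              rintro rfl
              exact hirr (r.t m) _ hpm_mem
                (htr (r.t m) _ hpm_mem _ hq_mem _ hpm_mem hilt hlt)
            have hiold : i ∈ (r.t (m-1)).verts := by
              rcases (aux_step_verts r m hm hmn i).mp hi with h | h
              · exact absurd h hip
              · exact h
            exact ⟨hiold, (hcons (r.t (m-1)) (r.t m) hsubm i hiold q hqold).mpr hilt⟩
          · rintro ⟨hi, hilt⟩
            exact ⟨aux_verts_mono hsubm hi,
              (hcons (r.t (m-1)) (r.t m) hsubm i hi q hqold).mp hilt⟩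
        have hch' : ChosenEdge E (r.t (m-1)).verts (P.lt (r.t (m-1))) (b v) v q k :=
          ⟨hqold, hch.2.1, by rw [← hfilter]; exact hch.2.2⟩
        -- v was already eligible at step m
        have hqnot : q ∉ (r.t (m-1)).verts.filter (fun i => P.lt (r.t (m-1)) i q) := by
          simp only [Finset.mem_filter]
          rintro ⟨_, h⟩
          exact hirr (r.t (m-1)) q hqold h
        have helig : b v + 1 ≤ ∑ i ∈ (r.t (m-1)).verts, E v i := by
          have e1 : ∑ i ∈ insert q ((r.t (m-1)).verts.filter (fun i => P.lt (r.t (m-1)) i q)), E v i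
              ≤ ∑ i ∈ (r.t (m-1)).verts, E v i :=
            Finset.sum_le_sum_of_subset
              (Finset.insert_subset hqold (Finset.filter_subset _ _))
          have e2 : ∑ i ∈ insert q ((r.t (m-1)).verts.filter (fun i => P.lt (r.t (m-1)) i q)), E v i
              = E v q + ∑ i ∈ (r.t (m-1)).verts.filter (fun i => P.lt (r.t (m-1)) i q), E v i :=
            Finset.sum_insert hqnot
          have e3 := hch'.2.2
          have e4 := hch'.2.1
          omega
        have hvold : v ∉ (r.t (m-1)).verts := fun h => hvnot (aux_verts_mono hsubm h)
        have hvne : v ≠ r.p m := by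
          rintro h
          exact hvnot (h ▸ hpm_mem)
        obtain ⟨taux, htsub, htverts, htch, htmin⟩ := r.minimal m hm hmn
        have hltaux : P.lt taux (r.p m) v := htmin v hvold helig hvne
        obtain ⟨q₂, k₂, hpar2, hch2⟩ := htch v hvold helig
        obtain ⟨hq2, hk2⟩ := aux_chosen_unique (r.t (m-1)).verts (P.lt (r.t (m-1)))
          (hirr (r.t (m-1))) (htr (r.t (m-1))) (htot (r.t (m-1))) hch2 hch'
        obtain ⟨q₃, k₃, hpar3, hch3⟩ := r.chosen m hm hmn
        obtain ⟨q₄, k₄, hpar4, hch4⟩ :=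
          htch (r.p m) (r.newvert m hm hmn).1 (r.eligible m hm hmn)
        obtain ⟨hq4, hk4⟩ := aux_chosen_unique (r.t (m-1)).verts (P.lt (r.t (m-1)))
          (hirr (r.t (m-1))) (htr (r.t (m-1))) (htot (r.t (m-1))) hch4 hch3
        -- t (m+1) is a subtree of taux
        have hsubfinal : (r.t (m+1)).IsSubtreeOf taux := by
          intro w hw
          by_cases hwv : w = v
          · subst hwv
            rw [hpar1, hpar2, hq2, hk2]
          · have hw' : (r.t (m+1)).par w = (r.t m).par w := hnv.2 w hwv
            rw [hw'] at hw ⊢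
            by_cases hwp : w = r.p m
            · subst hwp
              rw [hpar3, hpar4, hq4, hk4]
            · have hw'' : (r.t m).par w = (r.t (m-1)).par w := (r.newvert m hm hmn).2 w hwp
              rw [hw''] at hw ⊢
              exact htsub w hw
        exact (hcons (r.t (m+1)) taux hsubfinal _ hpm_mem1 _ hv_mem1).mpr hltaux

end AuxStmt13

/-- In the inductive construction of Φ(b) for a `G`-parking function `b` and a
proper set of tree orders, the added vertices come in increasing order of the
final tree's order: `p 0 < p 1 < ... < p n` in `π(T)` where `T = t n`. -/
theorem stmt_13 (n : ℕ) (E : Fin (n+1) → Fin (n+1) → ℕ)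
    (P : TreeOrders n E) (hP : P.Proper)
    (b : Fin (n+1) → ℕ) (hb : IsParking E b)
    (r : PhiRun E P b) :
    ∀ a c : ℕ, a < c → c ≤ n → P.lt (r.t n) (r.p a) (r.p c) := by
  intro a c
  induction c with
  | zero => intro h _; omega
  | succ c ih =>
    intro hac hcn
    have hstep : P.lt (r.t n) (r.p c) (r.p (c+1)) := by
      have h0 := aux_consec r hP c hcn
      have hsub := aux_sub_chain r (c+1) n hcn le_rfl
      have h1 : r.p c ∈ (r.t (c+1)).verts :=
        aux_verts_mono (aux_sub_chain r c (c+1) (by omega) hcn) (aux_p_mem r c (by omega))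
      have h2 : r.p (c+1) ∈ (r.t (c+1)).verts := aux_p_mem r (c+1) hcn
      exact (hP.2.2.2.2 _ _ hsub _ h1 _ h2).mp h0
    rcases Nat.lt_or_ge a c with h | h
    · have hprev := ih h (by omega)
      have ma : r.p a ∈ (r.t n).verts :=
        aux_verts_mono (aux_sub_chain r a n (by omega) le_rfl) (aux_p_mem r a (by omega))
      have mc : r.p c ∈ (r.t n).verts :=
        aux_verts_mono (aux_sub_chain r c n (by omega) le_rfl) (aux_p_mem r c (by omega))
      have mc1 : r.p (c+1) ∈ (r.t n).verts :=
        aux_verts_mono (aux_sub_chain r (c+1) n hcn le_rfl) (aux_p_mem r (c+1) hcn)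
      exact hP.2.1 (r.t n) _ ma _ mc _ mc1 hprev hstep
    · have : a = c := by omega
      rw [this]
      exact hstep
end

section
/- For the complete graph K_{n+1} (one edge (i,j) for each ordered pair i ≠ j), the number of K_{n+1}-parking functions equals (n+1)^{n-1}. -/
open Finset

open scoped Classical

/-- The complete digraph on `{0,...,n}`: one edge `(i,j)` for each ordered
pair of distinct vertices. -/
def completeE (n : ℕ) : Fin (n+1) → Fin (n+1) → ℕ := fun i j =>
  if i = j then 0 else 1

/-!
Rooted at `0`, a `K_{n+1}`-parking function is a classical parking function of length `n`:
for `U` of size `k` the condition asks for a value `< n + 1 - k` in `U`, which by pigeonhole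
is the same as asking that at least `m` values be `< m` for each `m ≤ n`.

These are counted by Pollak's circular argument. For `a : Fin n → ZMod (n+1)` the walk
`m ↦ #{i | a i ∈ {0, …, m-1}} - m`, read with residues, drops by exactly one per period `n+1`.
Hence it has exactly one cyclic minimum `e` in `[0, n]`, and `a + c` is a parking function
exactly when `-c = e`. So the `(n+1)^n` functions fall into orbits of size `n+1` under adding
constants, each containing exactly one parking function.
-/

section

variable {ι : Type*} [Fintype ι]

/-- Classical parking functions: the counting form of `c_i ≤ i - 1` for the sorted values. -/
def IsParkingFun (f : ι → ℕ) : Prop :=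
  ∀ m ≤ Fintype.card ι, m ≤ #{i | f i < m}

theorem IsParkingFun.lt_card {f : ι → ℕ} (hf : IsParkingFun f) (i : ι) :
    f i < Fintype.card ι := by
  have h := hf _ le_rfl
  rw [← card_univ] at h
  exact (card_filter_eq_iff.mp (le_antisymm (card_filter_le _ _) h)) i (mem_univ i)

theorem isParkingFun_iff_forall_finset {f : ι → ℕ} :
    IsParkingFun f ↔
      ∀ s : Finset ι, s.Nonempty → ∃ i ∈ s, f i + #s ≤ Fintype.card ι := by
  constructor
  · intro hf s hs
    have hs₁ := hs.card_pos
    have hsn := card_le_univ s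
    have hlow := hf (Fintype.card ι + 1 - #s) (by omega)
    obtain ⟨i, hi⟩ := inter_nonempty_of_card_lt_card_add_card
      (filter_subset (fun i => f i < Fintype.card ι + 1 - #s) univ) (subset_univ s)
      (by rw [card_univ]; omega)
    rw [mem_inter, mem_filter] at hi
    exact ⟨i, hi.2, by omega⟩
  · intro h m hm
    by_contra! hlt
    have hcompl := card_filter_add_card_filter_not (s := univ) (fun i => f i < m)
    rw [card_univ] at hcompl
    obtain ⟨i, hi, hfi⟩ := h {i | ¬f i < m} (card_pos.mp (by omega))
    rw [mem_filter] at hi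
    omega

theorem IsParkingFun.val_natCast {n : ℕ} {f : Fin n → ℕ} (hf : IsParkingFun f) (i : Fin n) :
    (f i : ZMod (n+1)).val = f i := by
  have := hf.lt_card i
  rw [Fintype.card_fin] at this
  exact ZMod.val_cast_of_lt (by omega)

end

theorem sum_compl_completeE {n : ℕ} {U : Finset (Fin (n+1))} {j : Fin (n+1)} (hj : j ∈ U) :
    ∑ i ∈ Uᶜ, completeE n j i = n + 1 - #U := by
  calc ∑ i ∈ Uᶜ, completeE n j i = ∑ i ∈ Uᶜ, 1 := sum_congr rfl fun i hi => by
          have hji : j ≠ i := by rintro rfl; exact mem_compl.mp hi hj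
          simp [completeE, hji]
    _ = n + 1 - #U := by rw [← card_eq_sum_ones, card_compl, Fintype.card_fin]

theorem exists_map_succEmb_eq {n : ℕ} {U : Finset (Fin (n+1))} (hU : 0 ∉ U) :
    ∃ s : Finset (Fin n), s.map (Fin.succEmb n) = U :=
  ⟨univ.filter (fun i : Fin n => i.succ ∈ U), by
    ext v
    cases v using Fin.cases with
    | zero => simp [hU]
    | succ i => simp⟩

theorem isParking_completeE_iff {n : ℕ} (b : Fin (n+1) → ℕ) :
    IsParking (completeE n) b ↔ IsParkingFun (fun i : Fin n => b i.succ) := by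
  rw [isParkingFun_iff_forall_finset, Fintype.card_fin]
  constructor
  · intro hb s hs
    obtain ⟨j, hj, hlt⟩ := hb (s.map (Fin.succEmb n)) (hs.map) (by simp)
    rw [sum_compl_completeE hj, card_map] at hlt
    obtain ⟨i, hi, rfl⟩ := mem_map.mp hj
    exact ⟨i, hi, by simp only [Fin.coe_succEmb] at hlt; omega⟩
  · intro h U hU hU0
    obtain ⟨s, rfl⟩ := exists_map_succEmb_eq hU0
    obtain ⟨i, hi, hle⟩ := h s (map_nonempty.mp hU)
    have hiU : i.succ ∈ s.map (Fin.succEmb n) := mem_map_of_mem (Fin.succEmb n) hi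
    refine ⟨i.succ, hiU, ?_⟩
    rw [sum_compl_completeE hiU, card_map]
    omega

namespace ParkingFun

variable {n : ℕ} (a : Fin n → ZMod (n+1))

def cyclicWalk (m : ℕ) : ℤ :=
  ∑ k ∈ range m, ((#{i | a i = k} : ℕ) - 1 : ℤ)

theorem cyclicWalk_eq_card_sub {m : ℕ} (hm : m ≤ n + 1) :
    cyclicWalk a m = #{i | (a i).val < m} - m := by
  have hfib := card_eq_sum_card_fiberwise (s := {i | (a i).val < m}) (t := range m)
    (f := fun i => (a i).val) (fun i hi => mem_range.mpr (mem_filter.mp hi).2)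
  rw [cyclicWalk, sum_sub_distrib, ← Nat.cast_sum, hfib]
  simp only [sum_const, card_range, nsmul_eq_mul, mul_one, sub_left_inj, Nat.cast_inj]
  refine sum_congr rfl fun k hk => congrArg card ?_
  have hk' : k < n + 1 := (mem_range.mp hk).trans_le hm
  ext i
  simp only [mem_filter, mem_univ, true_and]
  constructor
  · rintro hi
    rw [hi, ZMod.val_cast_of_lt hk']
    exact ⟨mem_range.mp hk, rfl⟩
  · rintro ⟨-, hi⟩
    rw [← hi, ZMod.natCast_zmod_val]

theorem cyclicWalk_succ_self : cyclicWalk a (n+1) = -1 := by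
  rw [cyclicWalk_eq_card_sub a le_rfl, filter_true_of_mem fun i _ => (a i).val_lt, card_univ,
    Fintype.card_fin]
  push_cast
  ring

theorem cyclicWalk_add_shift (c : ZMod (n+1)) {e : ℕ} (he : (e : ZMod (n+1)) = -c) (m : ℕ) :
    cyclicWalk (fun i => a i + c) m = cyclicWalk a (e + m) - cyclicWalk a e := by
  simp only [cyclicWalk, sum_range_add, add_sub_cancel_left]
  refine sum_congr rfl fun k _ => ?_
  push_cast
  simp only [he, neg_add_eq_sub, eq_sub_iff_add_eq]

theorem cyclicWalk_add_period (m : ℕ) : cyclicWalk a (m + (n+1)) = cyclicWalk a m - 1 := by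
  have h := cyclicWalk_add_shift a (-m) (neg_neg _).symm (n+1)
  rw [cyclicWalk_succ_self] at h
  linarith

theorem isParkingFun_val_iff :
    IsParkingFun (fun i => (a i).val) ↔ ∀ m ≤ n, 0 ≤ cyclicWalk a m := by
  rw [IsParkingFun, Fintype.card_fin]
  refine forall₂_congr fun m hm => ?_
  rw [cyclicWalk_eq_card_sub a (by omega), sub_nonneg, Nat.cast_le]

def IsCyclicMin (e : ℕ) : Prop :=
  ∀ m, e < m → m ≤ e + n → cyclicWalk a e ≤ cyclicWalk a m

theorem isParkingFun_shift_iff (c : ZMod (n+1)) :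
    IsParkingFun (fun i => (a i + c).val) ↔ IsCyclicMin a (-c).val := by
  have hshift := cyclicWalk_add_shift a c (ZMod.natCast_zmod_val (-c))
  rw [isParkingFun_val_iff]
  constructor
  · intro h m hm₁ hm₂
    have := h (m - (-c).val) (by omega)
    rwa [hshift, Nat.add_sub_cancel' hm₁.le, sub_nonneg] at this
  · intro h m hm
    rw [hshift, sub_nonneg]
    rcases m.eq_zero_or_pos with rfl | hm₀
    · simp
    · exact h _ (by omega) (by omega)

/-- The first minimum of the walk on `[0, n]` is a cyclic minimum, since past `n` the walk
repeats one unit lower. -/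
theorem exists_isCyclicMin : ∃ e ≤ n, IsCyclicMin a e := by
  obtain ⟨e₀, he₀, hmin⟩ :=
    (range (n+1)).exists_min_image (cyclicWalk a) nonempty_range_add_one
  have hex : ∃ e, e ≤ n ∧ cyclicWalk a e = cyclicWalk a e₀ :=
    ⟨e₀, mem_range_succ_iff.mp he₀, rfl⟩
  obtain ⟨he, heq⟩ := Nat.find_spec hex
  refine ⟨Nat.find hex, he, fun m hm₁ hm₂ => ?_⟩
  rw [heq]
  by_cases hmn : m ≤ n
  · exact hmin m (mem_range_succ_iff.mpr hmn)
  · obtain ⟨k, rfl⟩ : ∃ k, m = k + (n+1) := ⟨m - (n+1), by omega⟩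
    have hk := hmin k (mem_range_succ_iff.mpr (by omega))
    have hne : cyclicWalk a k ≠ cyclicWalk a e₀ := fun h =>
      Nat.find_min hex (by omega) ⟨by omega, h⟩
    rw [cyclicWalk_add_period]
    omega

variable {a} in
theorem IsCyclicMin.eq {e e' : ℕ} (he : IsCyclicMin a e) (he' : IsCyclicMin a e')
    (hen : e ≤ n) (hen' : e' ≤ n) : e = e' := by
  wlog hlt : e < e' generalizing e e'
  · rcases (not_lt.mp hlt).eq_or_lt with h | h
    · exact h.symm
    · exact (this he' he hen' hen h).symm
  have h₁ := he e' hlt (by omega)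
  have h₂ := he' (e + (n+1)) (by omega) (by omega)
  rw [cyclicWalk_add_period] at h₂
  omega

theorem existsUnique_isParkingFun_shift :
    ∃! c : ZMod (n+1), IsParkingFun (fun i => (a i + c).val) := by
  obtain ⟨e, hen, he⟩ := exists_isCyclicMin a
  have hval : ∀ c : ZMod (n+1), (-c).val ≤ n := fun c => Nat.lt_succ_iff.mp (-c).val_lt
  refine ⟨-e, ?_, fun c hc => ?_⟩
  · beta_reduce
    rwa [isParkingFun_shift_iff, neg_neg, ZMod.val_cast_of_lt (Nat.lt_succ_of_le hen)]
  · beta_reduce at hc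
    rw [isParkingFun_shift_iff] at hc
    rw [← neg_neg c, ← ZMod.natCast_zmod_val (-c), hc.eq he (hval c) hen]

variable (n) in
noncomputable def shiftEquiv :
    {a : Fin n → ZMod (n+1) // IsParkingFun (fun i => (a i).val)} × ZMod (n+1) ≃
      (Fin n → ZMod (n+1)) :=
  Equiv.ofBijective (fun p i => p.1.1 i + p.2) <| by
    constructor
    · rintro ⟨⟨a, ha⟩, c⟩ ⟨⟨a', ha'⟩, c'⟩ h
      dsimp only at h
      have ha'_eq (i : Fin n) : a i + (c - c') = a' i := by
        rw [← add_sub_assoc, congrFun h i, add_sub_cancel_right]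
      have hc : c - c' = 0 := (existsUnique_isParkingFun_shift a).unique
        (by simpa only [ha'_eq] using ha') (by simpa using ha)
      obtain rfl : c = c' := sub_eq_zero.mp hc
      obtain rfl : a = a' := funext fun i => by simpa using ha'_eq i
      rfl
    · intro b
      obtain ⟨c, hc, -⟩ := existsUnique_isParkingFun_shift b
      exact ⟨⟨⟨_, hc⟩, -c⟩, funext fun i => add_neg_cancel_right _ _⟩

variable (n) in
noncomputable def valEquiv :
    {f : Fin n → ℕ // IsParkingFun f} ≃
      {a : Fin n → ZMod (n+1) // IsParkingFun (fun i => (a i).val)} where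
  toFun f := ⟨fun i => f.1 i, by
    convert f.2 using 2 with i
    exact f.2.val_natCast i⟩
  invFun a := ⟨fun i => (a.1 i).val, a.2⟩
  left_inv f := Subtype.ext <| funext f.2.val_natCast
  right_inv a := Subtype.ext <| funext fun i => ZMod.natCast_zmod_val (a.1 i)

theorem card_isParkingFun : Nat.card {f : Fin n → ℕ // IsParkingFun f} = (n+1)^(n-1) := by
  have h := Nat.card_congr (shiftEquiv n)
  rw [Nat.card_prod, Nat.card_fun, Nat.card_zmod, Nat.card_fin,
    ← Nat.card_congr (valEquiv n)] at h
  rcases n with _ | n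
  · simpa using h
  · rw [pow_succ] at h
    rw [Nat.add_sub_cancel]
    exact Nat.eq_of_mul_eq_mul_right (by omega) h

end ParkingFun

noncomputable def completeParkingEquiv (n : ℕ) :
    {b : Fin (n+1) → ℕ // IsParking (completeE n) b ∧ b 0 = 0} ≃
      {f : Fin n → ℕ // IsParkingFun f} where
  toFun b := ⟨Fin.tail b.1, (isParking_completeE_iff b.1).mp b.2.1⟩
  invFun f := ⟨Fin.cons 0 f.1, by simpa [isParking_completeE_iff] using f.2, rfl⟩
  left_inv b := Subtype.ext <| by
    conv_rhs => rw [← Fin.cons_self_tail b.1, b.2.2]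
  right_inv f := rfl

/-- The number of classical parking functions, i.e. `K_{n+1}`-parking
functions, is `(n+1)^(n-1)`. -/
theorem stmt_16 (n : ℕ) :
    Nat.card {b : Fin (n+1) → ℕ // IsParking (completeE n) b ∧ b 0 = 0} =
      (n + 1) ^ (n - 1) := by
  rw [Nat.card_congr (completeParkingEquiv n), ParkingFun.card_isParkingFun]
end

section
/- Let G be a digraph on {0,...,n}, (b_1,...,b_n) a G-parking function, and T = Φ(P) the spanning tree produced by the construction using the breadth-first search tree order. Then for each i ≥ 0, the set W_i of vertices of T at height i equals the set of vertices marked at the i-th step of Dhar's burning algorithm applied to (b_1,...,b_n). -/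
open Finset

open scoped Classical

/-- Heights agree between a subtree and any tree containing it. -/
lemma height_sub {n : ℕ} {E : Fin (n+1) → Fin (n+1) → ℕ}
    (H : Subtree n E → Fin (n+1) → ℕ)
    (hH : ∀ t : Subtree n E, H t 0 = 0 ∧
      ∀ v q k, t.par v = some (q, k) → H t v = H t q + 1)
    {t T : Subtree n E} (hsub : t.IsSubtreeOf T) :
    ∀ v ∈ t.verts, H t v = H T v := by
  have key : ∀ v, Relation.ReflTransGen (fun a c => ∃ k, t.par a = some (c, k)) v 0 →
      H t v = H T v := by
    intro v hre
    induction hre using Relation.ReflTransGen.head_induction_on with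
    | refl => rw [(hH t).1, (hH T).1]
    | @head a c h' hre ih =>
      obtain ⟨k, hk⟩ := h'
      have hT : T.par a = some (c, k) := by
        rw [← hsub a (by rw [hk]; rfl)]; exact hk
      rw [(hH t).2 a c k hk, (hH T).2 a c k hT, ih]
  intro v hv
  rw [Subtree.verts, Finset.mem_filter] at hv
  rcases hv.2 with rfl | hv2
  · rw [(hH t).1, (hH T).1]
  · exact key v (t.reaches v hv2)

/-- Key lemma: if the chosen edge from `j` into `S` (w.r.t. the
height-then-index order given by `lv`, which equals the burning level `f` on
`S`) goes to `q`, then the burning level of `j` is one more than that of `q`. -/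
lemma chosen_level {n : ℕ} (E : Fin (n+1) → Fin (n+1) → ℕ) (b : Fin (n+1) → ℕ)
    (M : ℕ → Finset (Fin (n+1))) (f : Fin (n+1) → ℕ)
    (hfM : ∀ v i, v ∈ M i ↔ f v ≤ i)
    (hM0 : M 0 = {0})
    (hMs : ∀ i, M (i+1) =
      M i ∪ Finset.univ.filter (fun v => b v < ∑ w ∈ M i, E v w))
    (S : Finset (Fin (n+1))) (lv : Fin (n+1) → ℕ)
    (lt : Fin (n+1) → Fin (n+1) → Prop)
    (hlt : ∀ a c, lt a c ↔ (lv a < lv c ∨ (lv a = lv c ∧ a < c)))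
    (hS1 : ∀ v ∈ S, lv v = f v)
    (hS2 : ∀ v ∈ S, ∀ w, f w < f v → w ∈ S)
    (h0 : (0 : Fin (n+1)) ∈ S)
    (j : Fin (n+1)) (hj : j ∉ S) (q : Fin (n+1)) (k : ℕ)
    (hc : ChosenEdge E S lt (b j) j q k) :
    f j = f q + 1 := by
  obtain ⟨hqS, hkE, hsum⟩ := hc
  set F := S.filter (fun i => lt i q) with hF
  have hqF : q ∉ F := by
    simp only [hF, Finset.mem_filter]
    rintro ⟨-, h⟩
    rw [hlt] at h
    rcases h with h | ⟨-, h⟩ <;> exact lt_irrefl _ h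
  have hsubF : ∀ i ∈ F, i ∈ S ∧ (lv i < lv q ∨ (lv i = lv q ∧ i < q)) := by
    intro i hi
    rw [hF, Finset.mem_filter, hlt] at hi
    exact hi
  have hsub1 : insert q F ⊆ M (f q) := by
    intro i hi
    rw [Finset.mem_insert] at hi
    rw [hfM]
    rcases hi with rfl | hi
    · exact le_refl _
    · obtain ⟨hiS, hltq⟩ := hsubF i hi
      have h1 := hS1 i hiS
      have h2 := hS1 q hqS
      rcases hltq with h | ⟨h, -⟩ <;> omega
  have h1 : b j < ∑ w ∈ M (f q), E j w := by
    have h2 : b j < ∑ i ∈ insert q F, E j i := by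
      rw [Finset.sum_insert hqF]
      omega
    exact lt_of_lt_of_le h2 (Finset.sum_le_sum_of_subset hsub1)
  have hle : f j ≤ f q + 1 := by
    rw [← hfM, hMs]
    exact Finset.mem_union_right _ (Finset.mem_filter.mpr ⟨Finset.mem_univ _, h1⟩)
  have hge : ¬ f j ≤ f q := by
    intro hcon
    cases hfq : f q with
    | zero =>
      have hj0 : j ∈ M 0 := (hfM j 0).mpr (by omega)
      rw [hM0, Finset.mem_singleton] at hj0
      subst hj0; exact hj h0
    | succ c =>
      have hjm : j ∈ M (c+1) := (hfM j _).mpr (by omega)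
      rw [hMs, Finset.mem_union] at hjm
      rcases hjm with h | h
      · refine hj (hS2 q hqS j ?_)
        rw [hfM] at h; omega
      · rw [Finset.mem_filter] at h
        have hMcF : M c ⊆ F := by
          intro w hw
          rw [hfM] at hw
          have hwS : w ∈ S := hS2 q hqS w (by omega)
          rw [hF, Finset.mem_filter, hlt]
          refine ⟨hwS, Or.inl ?_⟩
          have h1 := hS1 w hwS
          have h2 := hS1 q hqS
          omega
        have h3 : ∑ w ∈ M c, E j w ≤ ∑ i ∈ F, E j i :=
          Finset.sum_le_sum_of_subset hMcF
        have h4 := h.2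
        omega
  omega

/-- For the breadth-first search tree orders, the construction Φ realizes
Dhar's burning algorithm: the vertices of height `i` in the produced spanning
tree are exactly the vertices newly marked at step `i` of the burning
algorithm. Here `H t` is the height function of the subtree `t`, and `M i` is
the set of vertices marked after `i` steps of the burning algorithm. -/
theorem stmt_18 (n : ℕ) (E : Fin (n+1) → Fin (n+1) → ℕ)
    (b : Fin (n+1) → ℕ) (hb : IsParking E b)
    (H : Subtree n E → Fin (n+1) → ℕ)
    (hH : ∀ t : Subtree n E, H t 0 = 0 ∧
      ∀ v q k, t.par v = some (q, k) → H t v = H t q + 1)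
    (r : PhiRun E ⟨fun t i j => H t i < H t j ∨ (H t i = H t j ∧ i < j)⟩ b)
    (M : ℕ → Finset (Fin (n+1)))
    (hM0 : M 0 = {0})
    (hMs : ∀ i, M (i+1) =
      M i ∪ Finset.univ.filter (fun v => b v < ∑ w ∈ M i, E v w)) :
    ∀ (i : ℕ) (v : Fin (n+1)),
      (v ∈ (r.t n).verts ∧ H (r.t n) v = i) ↔ (v ∈ M i ∧ ∀ k < i, v ∉ M k) := by
    -- membership in verts
  have hmem_verts : ∀ (t : Subtree n E) v, v ∈ t.verts ↔ v = 0 ∨ (t.par v).isSome := by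
    intro t v; simp [Subtree.verts]
  have hzero_mem : ∀ t : Subtree n E, (0 : Fin (n+1)) ∈ t.verts := by
    intro t; rw [hmem_verts]; exact Or.inl rfl
  -- monotonicity of M
  have hmono : ∀ i, M i ⊆ M (i+1) := by
    intro i; rw [hMs i]; exact Finset.subset_union_left
  have hmono' : ∀ i j, i ≤ j → M i ⊆ M j := by
    intro i j hij
    induction j, hij using Nat.le_induction with
    | base => exact subset_rfl
    | succ j hij ih => exact ih.trans (hmono j)
  have h0M : ∀ i, (0 : Fin (n+1)) ∈ M i := by
    intro i
    exact hmono' 0 i (Nat.zero_le _) (by rw [hM0]; exact Finset.mem_singleton_self 0)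
  -- M eventually covers everything
  have hgrow : ∀ i, M i = Finset.univ ∨ i + 1 ≤ (M i).card := by
    intro i
    induction i with
    | zero => right; rw [hM0]; simp
    | succ i ih =>
      by_cases hU : M i = Finset.univ
      · left
        rw [Finset.eq_univ_iff_forall]
        intro x
        exact hmono i (hU ▸ Finset.mem_univ x)
      · right
        have hne : ((M i)ᶜ).Nonempty := by
          by_contra h
          apply hU
          rw [Finset.eq_univ_iff_forall]
          intro x
          by_contra hx
          exact h ⟨x, Finset.mem_compl.mpr hx⟩
        have h0c : (0 : Fin (n+1)) ∉ (M i)ᶜ := by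
          simp only [Finset.mem_compl, not_not]; exact h0M i
        obtain ⟨j, hjU, hjb⟩ := hb (M i)ᶜ hne h0c
        rw [compl_compl] at hjb
        have hjM : j ∈ M (i+1) := by
          rw [hMs, Finset.mem_union]
          exact Or.inr (Finset.mem_filter.mpr ⟨Finset.mem_univ _, hjb⟩)
        have hss : M i ⊂ M (i+1) :=
          (Finset.ssubset_iff_of_subset (hmono i)).mpr ⟨j, hjM, Finset.mem_compl.mp hjU⟩
        have hcardlt := Finset.card_lt_card hss
        rcases ih with h | h
        · exact absurd h hU
        · omega
  have hMn : ∀ v, v ∈ M n := by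
    rcases hgrow n with h | h
    · intro v; rw [h]; exact Finset.mem_univ v
    · intro v
      have hle : (M n).card ≤ n + 1 := by
        simpa using Finset.card_le_univ (M n)
      have hcard : (M n).card = n + 1 := le_antisymm hle h
      have huniv : M n = Finset.univ := Finset.eq_univ_of_card _ (by simp [hcard])
      rw [huniv]; exact Finset.mem_univ v
  have hex : ∀ v, ∃ i, v ∈ M i := fun v => ⟨n, hMn v⟩
  let f : Fin (n+1) → ℕ := fun v => Nat.find (hex v)
  have hfM : ∀ v i, v ∈ M i ↔ f v ≤ i := by
    intro v i
    exact ⟨fun h => Nat.find_min' (hex v) h, fun h => hmono' _ _ h (Nat.find_spec (hex v))⟩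
  have hf0 : f 0 = 0 := by
    have h := (hfM 0 0).mp (by rw [hM0]; exact Finset.mem_singleton_self 0)
    omega
  have hfpos : ∀ v : Fin (n+1), v ≠ 0 → 1 ≤ f v := by
    intro v hv
    by_contra h
    have hm : v ∈ M 0 := (hfM v 0).mpr (by omega)
    rw [hM0, Finset.mem_singleton] at hm
    exact hv hm
  have hverts0 : (r.t 0).verts = {0} := by
    ext v
    rw [hmem_verts, Finset.mem_singleton, r.init v]
    simp
  -- main induction
  have main : ∀ m, m ≤ n → (∀ v ∈ (r.t m).verts, H (r.t m) v = f v) ∧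
      (∀ v ∈ (r.t m).verts, ∀ w, f w < f v → w ∈ (r.t m).verts) ∧
      ((r.t m).verts).card = m + 1 := by
    intro m
    induction m with
    | zero =>
      intro _
      refine ⟨?_, ?_, by rw [hverts0]; simp⟩
      · intro v hv
        rw [hverts0, Finset.mem_singleton] at hv
        subst hv
        rw [(hH (r.t 0)).1, hf0]
      · intro v hv w hw
        rw [hverts0, Finset.mem_singleton] at hv
        subst hv
        rw [hf0] at hw
        omega
    | succ m ih =>
      intro hmn
      obtain ⟨ih1, ih2, ih3⟩ := ih (by omega)
      have h0S : (0 : Fin (n+1)) ∈ (r.t m).verts := hzero_mem _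
      have hnv := r.newvert (m+1) (by omega) hmn
      simp only [Nat.add_sub_cancel] at hnv
      have hpmS : r.p (m+1) ∉ (r.t m).verts := hnv.1
      have hsubm := r.sub (m+1) (by omega) hmn
      simp only [Nat.add_sub_cancel] at hsubm
      have hpres : ∀ v ∈ (r.t m).verts, H (r.t (m+1)) v = f v := by
        intro v hv
        rw [← height_sub H hH hsubm v hv]
        exact ih1 v hv
      obtain ⟨q, k, hpar, hchos⟩ := r.chosen (m+1) (by omega) hmn
      simp only [Nat.add_sub_cancel] at hpar hchos
      have hfpm : f (r.p (m+1)) = f q + 1 :=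
        chosen_level E b M f hfM hM0 hMs (r.t m).verts (H (r.t m)) _
          (fun a c => Iff.rfl) ih1 ih2 h0S (r.p (m+1)) hpmS q k hchos
      have hq_in : q ∈ (r.t m).verts := hchos.1
      have hverts1 : (r.t (m+1)).verts = insert (r.p (m+1)) ((r.t m).verts) := by
        ext v
        rw [Finset.mem_insert]
        by_cases hv : v = r.p (m+1)
        · subst hv
          simp [hmem_verts, hpar]
        · rw [hmem_verts, hnv.2 v hv, ← hmem_verts (r.t m) v]
          exact ⟨fun h => Or.inr h, fun h => h.resolve_left hv⟩
      have hHpm : H (r.t (m+1)) (r.p (m+1)) = f (r.p (m+1)) := by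
        rw [(hH (r.t (m+1))).2 _ q k hpar, hpres q hq_in, hfpm]
      have new1 : ∀ v ∈ (r.t (m+1)).verts, H (r.t (m+1)) v = f v := by
        intro v hv
        rw [hverts1, Finset.mem_insert] at hv
        rcases hv with rfl | hv
        · exact hHpm
        · exact hpres v hv
      -- minimality step
      obtain ⟨taux, htsub, htverts, htpar, htmin⟩ := r.minimal (m+1) (by omega) hmn
      simp only [Nat.add_sub_cancel] at htsub htverts htpar htmin
      have helig_pm : b (r.p (m+1)) + 1 ≤ ∑ i ∈ (r.t m).verts, E (r.p (m+1)) i := by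
        have h := r.eligible (m+1) (by omega) hmn
        simpa using h
      have htaux_S : ∀ v ∈ (r.t m).verts, H taux v = f v := by
        intro v hv
        rw [← height_sub H hH htsub v hv]
        exact ih1 v hv
      have htaux_el : ∀ j, j ∉ (r.t m).verts →
          b j + 1 ≤ ∑ i ∈ (r.t m).verts, E j i → H taux j = f j := by
        intro j hjS hjel
        obtain ⟨q', k', hpar', hch'⟩ := htpar j hjS hjel
        have hfj : f j = f q' + 1 :=
          chosen_level E b M f hfM hM0 hMs (r.t m).verts (H (r.t m)) _
            (fun a c => Iff.rfl) ih1 ih2 h0S j hjS q' k' hch'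
        rw [(hH taux).2 j q' k' hpar', htaux_S q' hch'.1, hfj]
      have hmin_f : ∀ w, w ∉ (r.t m).verts → f (r.p (m+1)) ≤ f w := by
        obtain ⟨w0, hw0c, hw0min⟩ := Finset.exists_min_image ((r.t m).verts)ᶜ f
          ⟨r.p (m+1), Finset.mem_compl.mpr hpmS⟩
        have hw0S : w0 ∉ (r.t m).verts := Finset.mem_compl.mp hw0c
        have hw0min' : ∀ w, w ∉ (r.t m).verts → f w0 ≤ f w := fun w hw =>
          hw0min w (Finset.mem_compl.mpr hw)
        have hw0ne : w0 ≠ 0 := fun h => hw0S (h ▸ h0S)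
        have hfw0pos : 1 ≤ f w0 := hfpos w0 hw0ne
        have hw0el : b w0 + 1 ≤ ∑ i ∈ (r.t m).verts, E w0 i := by
          have hmem : w0 ∈ M (f w0) := (hfM w0 _).mpr le_rfl
          obtain ⟨c, hc⟩ : ∃ c, f w0 = c + 1 := ⟨f w0 - 1, by omega⟩
          rw [hc, hMs, Finset.mem_union] at hmem
          rcases hmem with h | h
          · rw [hfM] at h; omega
          · rw [Finset.mem_filter] at h
            have hMcS : M c ⊆ (r.t m).verts := by
              intro w hw
              by_contra hwS
              have h1 := hw0min' w hwS
              rw [hfM] at hw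
              omega
            have h2 : ∑ w ∈ M c, E w0 w ≤ ∑ i ∈ (r.t m).verts, E w0 i :=
              Finset.sum_le_sum_of_subset hMcS
            have h3 := h.2
            omega
        have hple : f (r.p (m+1)) ≤ f w0 := by
          by_cases hw0pm : w0 = r.p (m+1)
          · rw [hw0pm]
          · have hlt := htmin w0 hw0S hw0el hw0pm
            have hlt' : H taux (r.p (m+1)) < H taux w0 ∨
                (H taux (r.p (m+1)) = H taux w0 ∧ r.p (m+1) < w0) := hlt
            have h1 := htaux_el (r.p (m+1)) hpmS helig_pm
            have h2 := htaux_el w0 hw0S hw0el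
            rcases hlt' with h | ⟨h, -⟩ <;> omega
        intro w hw
        exact hple.trans (hw0min' w hw)
      have new2 : ∀ v ∈ (r.t (m+1)).verts, ∀ w, f w < f v → w ∈ (r.t (m+1)).verts := by
        intro v hv w hw
        rw [hverts1, Finset.mem_insert] at hv ⊢
        rcases hv with rfl | hv
        · by_cases hwS : w ∈ (r.t m).verts
          · exact Or.inr hwS
          · exact absurd (hmin_f w hwS) (by omega)
        · exact Or.inr (ih2 v hv w hw)
      have new3 : ((r.t (m+1)).verts).card = m + 2 := by
        rw [hverts1, Finset.card_insert_of_notMem hpmS, ih3]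
      exact ⟨new1, new2, new3⟩
  have hspan : (r.t n).verts = Finset.univ := by
    have h := (main n le_rfl).2.2
    exact Finset.eq_univ_of_card _ (by simp [h])
  intro i v
  have hvmem : v ∈ (r.t n).verts := by rw [hspan]; exact Finset.mem_univ v
  have hHv : H (r.t n) v = f v := (main n le_rfl).1 v hvmem
  constructor
  · rintro ⟨-, hHi⟩
    have hfv : f v = i := by omega
    refine ⟨(hfM v i).mpr (le_of_eq hfv), ?_⟩
    intro k hk hvk
    have h := (hfM v k).mp hvk
    omega
  · rintro ⟨hvi, hlt⟩
    have hge : f v ≤ i := (hfM v i).mp hvi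
    have hle : i ≤ f v := by
      by_contra h
      push_neg at h
      exact hlt (f v) h ((hfM v _).mpr le_rfl)
    exact ⟨hvmem, by omega⟩
end

section
/- A non-negative integer tuple (b_1,...,b_n) is a G-parking function if and only if Dhar's burning algorithm marks all vertices: starting with vertex 0 marked, and at each iteration marking every vertex v having more than b_v edges of G to already-marked vertices, eventually every vertex in {0,...,n} becomes marked. -/
open Finset

open scoped Classical

/-- `b` is a `G`-parking function iff Dhar's burning algorithm marks all
vertices: starting from `M 0 = {0}` and at each step marking every vertex `v`
with more than `b v` edges to already-marked vertices, eventually every vertex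
is marked. -/
theorem stmt_19 (n : ℕ) (E : Fin (n+1) → Fin (n+1) → ℕ) (b : Fin (n+1) → ℕ)
    (M : ℕ → Finset (Fin (n+1)))
    (hM0 : M 0 = {0})
    (hMs : ∀ i, M (i+1) =
      M i ∪ Finset.univ.filter (fun v => b v < ∑ w ∈ M i, E v w)) :
    IsParking E b ↔ ∃ i, ∀ v : Fin (n+1), v ∈ M i := by
  have hmono : ∀ i, M i ⊆ M (i+1) := fun i => by
    rw [hMs]; exact Finset.subset_union_left
  have h0 : ∀ i, (0 : Fin (n+1)) ∈ M i := by
    intro i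
    induction i with
    | zero => simp [hM0]
    | succ k ih => exact hmono k ih
  constructor
  · intro hp
    have hgrow : ∀ i, M i = Finset.univ ∨ (M i).card < (M (i+1)).card := by
      intro i
      by_cases h : M i = Finset.univ
      · exact Or.inl h
      · right
        have hU : ((M i)ᶜ).Nonempty := by
          rw [Finset.nonempty_iff_ne_empty]
          intro he
          exact h (by simpa using congrArg compl he)
        have h0U : (0 : Fin (n+1)) ∉ (M i)ᶜ := by
          simp [h0 i]
        obtain ⟨j, hj, hjb⟩ := hp _ hU h0U
        rw [compl_compl] at hjb
        have hjM : j ∉ M i := by simpa using hj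
        have hjM1 : j ∈ M (i+1) := by
          rw [hMs]
          exact Finset.mem_union_right _ (by simpa using hjb)
        exact Finset.card_lt_card ⟨hmono i, fun hsub => hjM (hsub hjM1)⟩
    have hcard : ∀ i, M i = Finset.univ ∨ i + 1 ≤ (M i).card := by
      intro i
      induction i with
      | zero => right; simp [hM0]
      | succ k ih =>
        rcases ih with h | h
        · left
          apply Finset.eq_univ_of_forall
          intro v
          exact hmono k (h ▸ Finset.mem_univ v)
        · rcases hgrow k with h' | h'
          · left
            apply Finset.eq_univ_of_forall
            intro v
            exact hmono k (h' ▸ Finset.mem_univ v)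
          · right; omega
    refine ⟨n, fun v => ?_⟩
    rcases hcard n with h | h
    · exact h ▸ Finset.mem_univ v
    · have : M n = Finset.univ := Finset.eq_univ_of_card _ (le_antisymm
        (by simpa using Finset.card_le_univ (M n)) (by simpa using h))
      exact this ▸ Finset.mem_univ v
  · rintro ⟨i, hi⟩ U hUne hU0
    have hex : ∃ m, (M m ∩ U).Nonempty := by
      obtain ⟨u, hu⟩ := hUne
      exact ⟨i, u, Finset.mem_inter.2 ⟨hi u, hu⟩⟩
    classical
    obtain ⟨v, hv⟩ := Nat.find_spec hex
    have hvM : v ∈ M (Nat.find hex) := (Finset.mem_inter.1 hv).1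
    have hvU : v ∈ U := (Finset.mem_inter.1 hv).2
    have hm0 : Nat.find hex ≠ 0 := by
      intro h
      rw [h, hM0] at hvM
      simp at hvM
      exact hU0 (hvM ▸ hvU)
    obtain ⟨k, hkm⟩ : ∃ k, Nat.find hex = k + 1 := ⟨Nat.find hex - 1, by omega⟩
    have hk : ¬ (M k ∩ U).Nonempty := Nat.find_min hex (by omega)
    have hkU : M k ⊆ Uᶜ := by
      intro w hw
      rw [Finset.mem_compl]
      intro hwU
      exact hk ⟨w, Finset.mem_inter.2 ⟨hw, hwU⟩⟩
    rw [hkm, hMs] at hvM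
    rcases Finset.mem_union.1 hvM with h | h
    · exact absurd ⟨v, Finset.mem_inter.2 ⟨h, hvU⟩⟩ hk
    · refine ⟨v, hvU, lt_of_lt_of_le (Finset.mem_filter.1 h).2 ?_⟩
      exact Finset.sum_le_sum_of_subset hkU
end
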